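/- arXiv:2308.05448 — 2 statements merged into one kernel-verified Lean document; each statement's English description precedes it below -/
import Mathlib

section
/- Let z ∈ D_{F⋆}. Then almost everywhere on (0,1): z^[n−1] = z^(n−1) + Σ_{j=0}^{n−3} ( Σ_{s=j}^{n−3} (−1)^{s+n−1} C(s,j) p_{s+1}^{(s−j)} ) z^(j) + (−1)^n σ z, and z^[n] = (z^[n−1])′ + (−1)^{n+1} σ z′, where C(s,j) denotes the binomial coefficient s!/(j!(s−j)!). -/
open MeasureTheory

noncomputable section

/-- A function `h` is absolutely continuous on `[0,1]`: it is the integral of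
an integrable function. -/
def ACOn01 (h : ℝ → ℂ) : Prop :=
  ∃ g : ℝ → ℂ, IntegrableOn g (Set.Icc (0:ℝ) 1) ∧
    ∀ x ∈ Set.Icc (0:ℝ) 1, h x = h 0 + ∫ t in (0:ℝ)..x, g t

/-- Membership in the Sobolev space `W_2^s[0,1]`: the derivatives of order
`< s` are absolutely continuous on `[0,1]` and the `s`-th derivative is in
`L²[0,1]`.  For `s = 0` this is just `L²[0,1]`. -/
def MemW2 (s : ℕ) (g : ℝ → ℂ) : Prop :=
  (∀ j : ℕ, j + 1 ≤ s → ACOn01 (deriv^[j] g)) ∧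
  MemLp (deriv^[s] g) 2 (volume.restrict (Set.Icc (0:ℝ) 1))

/-- The entries `f_{k,j}` of the associated matrix `F`:
`f_{n−1,1} = −σ`, `f_{n,2} = σ − p₁`, `f_{n,j} = −p_{j−1}` for `3 ≤ j ≤ n−1`,
all other entries zero. -/
def Fmat (n : ℕ) (σ : ℝ → ℂ) (p : ℕ → ℝ → ℂ) (k j : ℕ) : ℝ → ℂ := fun x =>
  if k = n - 1 ∧ j = 1 then -σ x
  else if k = n ∧ j = 2 then σ x - p 1 x
  else if k = n ∧ 3 ≤ j ∧ j ≤ n - 1 then -(p (j-1) x)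
  else 0

/-- The entries `f⋆_{k,j} = (−1)^{k+j+1} f_{n−j+1, n−k+1}` of the matrix `F⋆`. -/
def Fstar (n : ℕ) (σ : ℝ → ℂ) (p : ℕ → ℝ → ℂ) (k j : ℕ) : ℝ → ℂ := fun x =>
  (-1 : ℂ)^(k + j + 1) * Fmat n σ p (n - j + 1) (n - k + 1) x

/-- `Y : ℕ → ℝ → ℂ` is the tower of quasi-derivatives (w.r.t. the matrix with
entries `f`) of the function `Y 0`:  `Y k` is absolutely continuous on `[0,1]`
for `k ≤ n−1`, and for `1 ≤ k ≤ n` the recursive relation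
`Y (k−1)′ = Y k + Σ_{j=1}^{k} f_{k,j} · Y (j−1)`, i.e.
`Y k = (Y (k−1))′ − Σ_{j=1}^{k} f_{k,j} · Y (j−1)`, holds a.e. on `(0,1)`. -/
def QuasiChain (n : ℕ) (f : ℕ → ℕ → ℝ → ℂ) (Y : ℕ → ℝ → ℂ) : Prop :=
  (∀ k : ℕ, k ≤ n - 1 → ACOn01 (Y k)) ∧
  (∀ k : ℕ, 1 ≤ k → k ≤ n →
    ∀ᵐ x ∂(volume.restrict (Set.Ioo (0:ℝ) 1)),
      HasDerivAt (Y (k-1)) (Y k x + ∑ j ∈ Finset.Icc 1 k, f k j x * Y (j-1) x) x)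

section Aux

open Set Filter intervalIntegral Metric Topology

lemma ae_hasDerivAt_primitive {g : ℝ → ℂ} (hg : Integrable g) :
    ∀ᵐ x : ℝ, HasDerivAt (fun y => ∫ t in (0:ℝ)..y, g t) (g x) x := by
  have hloc : LocallyIntegrable g volume := hg.locallyIntegrable
  filter_upwards [IsUnifLocDoublingMeasure.ae_tendsto_average_norm_sub (μ := volume) hloc 1]
    with x hx
  have hδ : Tendsto (fun y : ℝ => |y - x|) (𝓝[≠] x) (𝓝[>] 0) := by
    rw [Metric.tendsto_nhdsWithin_nhdsWithin]
    intro ε hε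
    exact ⟨ε, hε, fun {y} hy hd => by
      constructor
      · simpa [Set.mem_Ioi, abs_pos, sub_eq_zero] using sub_ne_zero.mpr hy
      · simpa [Real.dist_eq, abs_abs] using hd⟩
  have key := hx (fun _ : ℝ => x) (fun y => |y - x|) hδ
    (Eventually.of_forall fun y => by simp [Metric.mem_closedBall])
  rw [hasDerivAt_iff_isLittleO, Asymptotics.isLittleO_iff]
  intro ε hε
  have hε2 : (0:ℝ) < ε / 2 := by positivity
  have h2 : ∀ᶠ y in 𝓝[≠] x,
      (⨍ t in closedBall x |y - x|, ‖g t - g x‖) < ε / 2 := key.eventually_lt_const hε2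
  rw [eventually_nhdsWithin_iff] at h2
  filter_upwards [h2] with y hy
  rcases eq_or_ne y x with rfl | hne
  · simp
  have hav := hy hne
  have hii : ∀ a b : ℝ, IntervalIntegrable g volume a b := fun a b => hg.intervalIntegrable
  have e1 : (∫ t in (0:ℝ)..y, g t) - (∫ t in (0:ℝ)..x, g t) = ∫ t in x..y, g t :=
    integral_interval_sub_left (hii 0 y) (hii 0 x)
  have e2 : (y - x) • g x = ∫ t in x..y, g x := (intervalIntegral.integral_const (g x)).symm
  have e3 : (∫ t in (0:ℝ)..y, g t) - (∫ t in (0:ℝ)..x, g t) - (y - x) • g x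
      = ∫ t in x..y, (g t - g x) := by
    rw [e1, e2, ← intervalIntegral.integral_sub (hii x y) (intervalIntegrable_const)]
  rw [e3]
  have hsub : Set.uIoc x y ⊆ closedBall x |y - x| := by
    intro t ht
    rw [Set.mem_uIoc] at ht
    rw [Metric.mem_closedBall, Real.dist_eq]
    rw [abs_le]
    rcases ht with ⟨h1, h2⟩ | ⟨h1, h2⟩
    · constructor <;> [nlinarith [abs_nonneg (y-x), le_abs_self (y-x)]; nlinarith [le_abs_self (y-x)]]
    · constructor <;> nlinarith [neg_abs_le (y-x)]
  have hint : IntegrableOn (fun t => ‖g t - g x‖) (closedBall x |y - x|) volume := by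
    apply Integrable.norm
    exact hg.integrableOn.sub (integrableOn_const measure_closedBall_lt_top.ne)
  have b1 : ‖∫ t in x..y, (g t - g x)‖ ≤ ∫ t in Set.uIoc x y, ‖g t - g x‖ :=
    intervalIntegral.norm_integral_le_integral_norm_uIoc
  have b2 : (∫ t in Set.uIoc x y, ‖g t - g x‖) ≤ ∫ t in closedBall x |y - x|, ‖g t - g x‖ :=
    setIntegral_mono_set hint (Eventually.of_forall fun t => norm_nonneg _)
      (HasSubset.Subset.eventuallyLE hsub)
  have hvol : (volume (closedBall x |y - x|)).toReal = 2 * |y - x| := by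
    rw [Real.volume_closedBall, ENNReal.toReal_ofReal (by positivity)]
  have b3 : (∫ t in closedBall x |y - x|, ‖g t - g x‖)
      = (2 * |y - x|) * ⨍ t in closedBall x |y - x|, ‖g t - g x‖ := by
    have habs : |y - x| ≠ 0 := abs_ne_zero.mpr (sub_ne_zero.mpr hne)
    rw [setAverage_eq, smul_eq_mul, ← mul_assoc, measureReal_def, hvol,
      mul_inv_cancel₀ (mul_ne_zero two_ne_zero habs), one_mul]
  have : ‖∫ t in x..y, (g t - g x)‖ ≤ (2 * |y - x|) * (ε / 2) := by
    refine (b1.trans (b2.trans_eq b3)).trans ?_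
    exact mul_le_mul_of_nonneg_left hav.le (by positivity)
  calc ‖∫ t in x..y, (g t - g x)‖ ≤ (2 * |y - x|) * (ε / 2) := this
    _ = ε * ‖y - x‖ := by rw [Real.norm_eq_abs]; ring

lemma rep_continuousOn {h g : ℝ → ℂ} (hgi : IntegrableOn g (Icc (0:ℝ) 1))
    (hrep : ∀ x ∈ Icc (0:ℝ) 1, h x = h 0 + ∫ t in (0:ℝ)..x, g t) :
    ContinuousOn h (Icc (0:ℝ) 1) := by
  have h1 : ContinuousOn (fun x => ∫ t in (0:ℝ)..x, g t) (Icc (0:ℝ) 1) := by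
    have := continuousOn_primitive_interval
      (a := (0:ℝ)) (b := 1) (μ := volume) (f := g) (by rwa [uIcc_of_le zero_le_one])
    rwa [uIcc_of_le zero_le_one] at this
  exact (continuousOn_const.add h1).congr hrep

lemma rep_ae_hasDerivAt {h g : ℝ → ℂ} (hgi : IntegrableOn g (Icc (0:ℝ) 1))
    (hrep : ∀ x ∈ Icc (0:ℝ) 1, h x = h 0 + ∫ t in (0:ℝ)..x, g t) :
    ∀ᵐ x ∂(volume.restrict (Ioo (0:ℝ) 1)), HasDerivAt h (g x) x := by
  set g1 := (Set.Icc (0:ℝ) 1).indicator g with hg1def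
  have hg1 : Integrable g1 := (integrable_indicator_iff measurableSet_Icc).2 hgi
  have H' : ∀ᵐ x ∂(volume.restrict (Ioo (0:ℝ) 1)),
      HasDerivAt (fun y => ∫ t in (0:ℝ)..y, g1 t) (g1 x) x :=
    ae_restrict_of_ae (ae_hasDerivAt_primitive hg1)
  filter_upwards [H', ae_restrict_mem measurableSet_Ioo] with x hx hmem
  have hev : h =ᶠ[𝓝 x] fun y => h 0 + ∫ t in (0:ℝ)..y, g1 t := by
    filter_upwards [Ioo_mem_nhds hmem.1 hmem.2] with y hy
    rw [hrep y (Ioo_subset_Icc_self hy)]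
    congr 1
    apply intervalIntegral.integral_congr
    intro t ht
    rw [Set.uIcc_of_le hy.1.le] at ht
    have : t ∈ Icc (0:ℝ) 1 := ⟨ht.1, ht.2.trans hy.2.le⟩
    simp [hg1def, Set.indicator_of_mem this]
  have := (hx.const_add (h 0)).congr_of_eventuallyEq hev
  rwa [hg1def, Set.indicator_of_mem (Ioo_subset_Icc_self hmem)] at this

lemma uIoc_subset_Ioo01 {x y : ℝ} (hx : x ∈ Ioo (0:ℝ) 1) (hy : y ∈ Ioo (0:ℝ) 1) :
    Set.uIoc x y ⊆ Ioo (0:ℝ) 1 := by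
  intro t ht
  rw [Set.mem_uIoc] at ht
  rcases ht with ⟨h1, h2⟩ | ⟨h1, h2⟩
  · exact ⟨hx.1.trans h1, h2.trans_lt hy.2⟩
  · exact ⟨hy.1.trans h1, h2.trans_lt hx.2⟩

lemma rep_hasDerivAt_of_continuousOn {h g H : ℝ → ℂ}
    (hgi : IntegrableOn g (Icc (0:ℝ) 1))
    (hrep : ∀ x ∈ Icc (0:ℝ) 1, h x = h 0 + ∫ t in (0:ℝ)..x, g t)
    (hae : ∀ᵐ x ∂(volume.restrict (Ioo (0:ℝ) 1)), HasDerivAt h (H x) x)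
    (hH : ContinuousOn H (Ioo (0:ℝ) 1)) :
    ∀ x ∈ Ioo (0:ℝ) 1, HasDerivAt h (H x) x := by
  have hgH' : ∀ᵐ t ∂(volume : Measure ℝ), t ∈ Ioo (0:ℝ) 1 → g t = H t := by
    rw [← ae_restrict_iff' measurableSet_Ioo]
    filter_upwards [rep_ae_hasDerivAt hgi hrep, hae] with t h1 h2 using h1.unique h2
  intro x hx
  have hxc : ContinuousAt H x := hH.continuousAt (isOpen_Ioo.mem_nhds hx)
  have hsm : StronglyMeasurableAtFilter H (𝓝 x) volume :=
    ContinuousOn.stronglyMeasurableAtFilter isOpen_Ioo hH x hx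
  have hprim : HasDerivAt (fun y => ∫ t in x..y, H t) (H x) x :=
    intervalIntegral.integral_hasDerivAt_right (by simp) hsm hxc
  have hev : h =ᶠ[𝓝 x] fun y => h x + ∫ t in x..y, H t := by
    filter_upwards [Ioo_mem_nhds hx.1 hx.2] with y hy
    have hiy : IntervalIntegrable g volume 0 y := by
      apply IntegrableOn.intervalIntegrable
      apply hgi.mono_set
      rw [uIcc_of_le hy.1.le]
      exact Icc_subset_Icc le_rfl hy.2.le
    have hix : IntervalIntegrable g volume 0 x := by
      apply IntegrableOn.intervalIntegrable
      apply hgi.mono_set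
      rw [uIcc_of_le hx.1.le]
      exact Icc_subset_Icc le_rfl hx.2.le
    have e1 : h y - h x = ∫ t in x..y, g t := by
      rw [hrep y (Ioo_subset_Icc_self hy), hrep x (Ioo_subset_Icc_self hx)]
      rw [add_sub_add_left_eq_sub]
      exact integral_interval_sub_left hiy hix
    have e2 : (∫ t in x..y, g t) = ∫ t in x..y, H t := by
      apply intervalIntegral.integral_congr_ae
      filter_upwards [hgH'] with t ht htm
      exact ht (uIoc_subset_Ioo01 hx hy htm)
    have : h y = h x + ∫ t in x..y, H t := by rw [← e2, ← e1]; ring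
    exact this
  exact (hprim.const_add (h x)).congr_of_eventuallyEq hev

lemma pascal_identity (a b : ℕ → ℂ) (t : ℕ) :
    ∑ j ∈ Finset.range (t+1),
      ((t.choose j : ℂ) * a (t+1-j) * b j + (t.choose j : ℂ) * a (t-j) * b (j+1))
    = ∑ j ∈ Finset.range (t+2), ((t+1).choose j : ℂ) * a (t+1-j) * b j := by
  rw [Finset.sum_add_distrib]
  rw [Finset.sum_range_succ' (fun j => ((t+1).choose j : ℂ) * a (t+1-j) * b j) (t+1)]
  have e1 : ∑ j ∈ Finset.range (t+1), (t.choose j : ℂ) * a (t+1-j) * b j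
      = (∑ j ∈ Finset.range (t+1), (t.choose (j+1) : ℂ) * a (t-j) * b (j+1))
        + (t.choose 0 : ℂ) * a (t+1) * b 0 := by
    calc ∑ j ∈ Finset.range (t+1), (t.choose j : ℂ) * a (t+1-j) * b j
        = ∑ j ∈ Finset.range (t+2), (t.choose j : ℂ) * a (t+1-j) * b j := by
          rw [Finset.sum_range_succ (fun j => (t.choose j : ℂ) * a (t+1-j) * b j) (t+1)]
          simp [Nat.choose_succ_self]
      _ = _ := by
          rw [Finset.sum_range_succ' (fun j => (t.choose j : ℂ) * a (t+1-j) * b j) (t+1)]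
          simp [Nat.succ_sub_succ]
  rw [e1]
  rw [add_assoc, add_comm ((t.choose 0 : ℂ) * a (t+1) * b 0), ← add_assoc, ← Finset.sum_add_distrib]
  congr 1
  · apply Finset.sum_congr rfl
    intro j hj
    have hc : ((t+1).choose (j+1) : ℂ) = (t.choose j : ℂ) + (t.choose (j+1) : ℂ) := by
      rw [← Nat.cast_add, Nat.choose_succ_succ]
    rw [Nat.succ_sub_succ, hc]
    ring
  · simp

lemma hasDerivAt_leibniz_sum {u w : ℕ → ℝ → ℂ} {t : ℕ} {x : ℝ}
    (hu : ∀ i, i ≤ t → HasDerivAt (u i) (u (i+1) x) x)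
    (hw : ∀ j, j ≤ t → HasDerivAt (w j) (w (j+1) x) x) :
    HasDerivAt (fun y => ∑ j ∈ Finset.range (t+1), (t.choose j : ℂ) * u (t-j) y * w j y)
      (∑ j ∈ Finset.range (t+2), ((t+1).choose j : ℂ) * u (t+1-j) x * w j x) x := by
  have h1 : HasDerivAt (fun y => ∑ j ∈ Finset.range (t+1), (t.choose j : ℂ) * u (t-j) y * w j y)
      (∑ j ∈ Finset.range (t+1),
        ((t.choose j : ℂ) * u (t+1-j) x * w j x + (t.choose j : ℂ) * u (t-j) x * w (j+1) x)) x := by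
    apply HasDerivAt.fun_sum
    intro j hj
    have hj' : j ≤ t := Nat.lt_succ_iff.mp (Finset.mem_range.mp hj)
    have hd := (((hu (t-j) (Nat.sub_le _ _)).const_mul ((t.choose j : ℂ))).mul (hw j hj'))
    have he : t - j + 1 = t + 1 - j := by omega
    rw [he] at hd
    exact hd
  rwa [pascal_identity (fun i => u i x) (fun j => w j x) t] at h1

lemma swap_identity (n : ℕ) (hn : 3 ≤ n) (A : ℕ → ℕ → ℂ) (B : ℕ → ℂ) :
    ∑ j ∈ Finset.range (n-2),
      (∑ s ∈ Finset.Icc j (n-3), (-1:ℂ)^(s+n-1) * (s.choose j : ℂ) * A (s+1) (s-j)) * B j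
    = ∑ m ∈ Finset.Icc 2 (n-1), (-1:ℂ)^m *
        ∑ j ∈ Finset.range (n-1-m+1), ((n-1-m).choose j : ℂ) * A (n-m) (n-1-m-j) * B j := by
  have step1 : ∀ m ∈ Finset.Icc 2 (n-1), (-1:ℂ)^m *
        ∑ j ∈ Finset.range (n-1-m+1), ((n-1-m).choose j : ℂ) * A (n-m) (n-1-m-j) * B j
      = ∑ j ∈ Finset.range (n-1-m+1), (-1:ℂ)^m * ((n-1-m).choose j : ℂ) * A (n-m) (n-1-m-j) * B j := by
    intro m hm
    rw [Finset.mul_sum]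
    apply Finset.sum_congr rfl
    intro j hj
    ring
  rw [Finset.sum_congr rfl step1]
  have hRHS : ∑ m ∈ Finset.Icc 2 (n-1), ∑ j ∈ Finset.range (n-1-m+1),
        (-1:ℂ)^m * ((n-1-m).choose j : ℂ) * A (n-m) (n-1-m-j) * B j
      = ∑ s ∈ Finset.range (n-2), ∑ j ∈ Finset.range (s+1),
          (-1:ℂ)^(s+n-1) * (s.choose j : ℂ) * A (s+1) (s-j) * B j := by
    apply Finset.sum_nbij' (i := fun m => n-1-m) (j := fun s => n-1-s)
    · intro m hm
      rw [Finset.mem_Icc] at hm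
      rw [Finset.mem_range]
      omega
    · intro s hs
      rw [Finset.mem_range] at hs
      rw [Finset.mem_Icc]
      omega
    · intro m hm
      rw [Finset.mem_Icc] at hm
      omega
    · intro s hs
      rw [Finset.mem_range] at hs
      omega
    · intro m hm
      rw [Finset.mem_Icc] at hm
      apply Finset.sum_congr rfl
      intro j hj
      have e2 : n - 1 - m + 1 = n - m := by omega
      have e4 : (n - 1 - m) + n - 1 = m + 2 * (n - 1 - m) := by omega
      rw [e2, e4, pow_add, pow_mul, neg_one_sq, one_pow, mul_one]
  rw [hRHS]
  rw [Finset.sum_comm' (s := Finset.range (n-2)) (t := fun s => Finset.range (s+1))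
    (t' := Finset.range (n-2)) (s' := fun j => Finset.Icc j (n-3))
    (by intro s j; simp only [Finset.mem_range, Finset.mem_Icc]; omega)]
  apply Finset.sum_congr rfl
  intro j hj
  rw [Finset.sum_mul]

end Aux

/-- auxiliary: the Leibniz-type sums appearing in the quasi-derivative formulas. -/
def Saux (n : ℕ) (p : ℕ → ℝ → ℂ) (z : ℝ → ℂ) (t m : ℕ) (x : ℝ) : ℂ :=
  ∑ j ∈ Finset.range (t+1), (t.choose j : ℂ) * deriv^[t-j] (p (n-m)) x * deriv^[j] z x

/-- auxiliary: the expression of `Z k` in terms of genuine derivatives of `z`. -/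
def Eaux (n : ℕ) (p : ℕ → ℝ → ℂ) (z : ℝ → ℂ) (Z : ℕ → ℝ → ℂ) (k : ℕ) (x : ℝ) : ℂ :=
  Z k x + ∑ m ∈ Finset.Icc 2 k, (-1:ℂ)^(m+1) * Saux n p z (k-m) m x

theorem statement4
    (n : ℕ) (hn : 3 ≤ n)
    (σ : ℝ → ℂ) (hσ : MemLp σ 2 (volume.restrict (Set.Icc (0:ℝ) 1)))
    (p : ℕ → ℝ → ℂ) (hp : ∀ k : ℕ, 1 ≤ k → k ≤ n - 2 → MemW2 (k-1) (p k))
    (z : ℝ → ℂ) (Z : ℕ → ℝ → ℂ) (hZ0 : Z 0 = z)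
    (hZ : QuasiChain n (Fstar n σ p) Z) :
    (∀ᵐ x ∂(volume.restrict (Set.Ioo (0:ℝ) 1)),
      Z (n-1) x = deriv^[n-1] z x
        + (∑ j ∈ Finset.range (n-2),
            (∑ s ∈ Finset.Icc j (n-3),
              (-1 : ℂ)^(s+n-1) * (Nat.choose s j : ℂ) * deriv^[s-j] (p (s+1)) x)
            * deriv^[j] z x)
        + (-1 : ℂ)^n * σ x * z x) ∧
    (∀ᵐ x ∂(volume.restrict (Set.Ioo (0:ℝ) 1)),
      Z n x = deriv (Z (n-1)) x + (-1 : ℂ)^(n+1) * σ x * deriv z x) := by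
  classical
  obtain ⟨hAC, hchain⟩ := hZ
  -- facts about the p's
  have hpAC : ∀ i d : ℕ, 1 ≤ i → i ≤ n-2 → d + 2 ≤ i → ACOn01 (deriv^[d] (p i)) := by
    intro i d h1 h2 h3
    exact (hp i h1 h2).1 d (by omega)
  have hpCont : ∀ i d : ℕ, 1 ≤ i → i ≤ n-2 → d + 2 ≤ i →
      ContinuousOn (deriv^[d] (p i)) (Set.Icc (0:ℝ) 1) := by
    intro i d h1 h2 h3
    obtain ⟨g, hg, hrep⟩ := hpAC i d h1 h2 h3
    exact rep_continuousOn hg hrep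
  have hpAe : ∀ i d : ℕ, 1 ≤ i → i ≤ n-2 → d + 2 ≤ i →
      ∀ᵐ x ∂(volume.restrict (Set.Ioo (0:ℝ) 1)),
        HasDerivAt (deriv^[d] (p i)) (deriv^[d+1] (p i) x) x := by
    intro i d h1 h2 h3
    obtain ⟨g, hg, hrep⟩ := hpAC i d h1 h2 h3
    filter_upwards [rep_ae_hasDerivAt hg hrep] with x hx
    have hit : deriv^[d+1] (p i) x = deriv (deriv^[d] (p i)) x := by
      rw [Function.iterate_succ_apply']
    rw [hit, hx.deriv]
    exact hx
  have hpEv : ∀ i d : ℕ, 1 ≤ i → i ≤ n-2 → d + 3 ≤ i →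
      ∀ x ∈ Set.Ioo (0:ℝ) 1, HasDerivAt (deriv^[d] (p i)) (deriv^[d+1] (p i) x) x := by
    intro i d h1 h2 h3
    obtain ⟨g, hg, hrep⟩ := hpAC i d h1 h2 (by omega)
    apply rep_hasDerivAt_of_continuousOn hg hrep (hpAe i d h1 h2 (by omega))
    exact (hpCont i (d+1) h1 h2 (by omega)).mono Set.Ioo_subset_Icc_self
  -- facts about the Z's
  have hZCont : ∀ k, k ≤ n-1 → ContinuousOn (Z k) (Set.Icc (0:ℝ) 1) := by
    intro k hk
    obtain ⟨g, hg, hrep⟩ := hAC k hk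
    exact rep_continuousOn hg hrep
  have hzc : ContinuousOn z (Set.Ioo (0:ℝ) 1) := by
    have h0 := hZCont 0 (by omega)
    rw [hZ0] at h0
    exact h0.mono Set.Ioo_subset_Icc_self
  have collapse1 : ∀ k, 1 ≤ k → k ≤ n-1 → ∀ x : ℝ,
      ∑ j ∈ Finset.Icc 1 k, Fstar n σ p k j x * Z (j-1) x = Fstar n σ p k 1 x * z x := by
    intro k h1 h2 x
    rw [← hZ0]
    have := Finset.sum_eq_single_of_mem (f := fun j => Fstar n σ p k j x * Z (j-1) x)
      1 (Finset.mem_Icc.mpr ⟨le_rfl, h1⟩) ?_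
    · simpa using this
    · intro j hj hne
      rw [Finset.mem_Icc] at hj
      have hF : Fstar n σ p k j x = 0 := by
        simp only [Fstar, Fmat]
        rw [if_neg (by omega), if_neg (by omega), if_neg (by omega), mul_zero]
      simp only [hF, zero_mul]
  have chainAe : ∀ k, 1 ≤ k → k ≤ n-1 →
      ∀ᵐ x ∂(volume.restrict (Set.Ioo (0:ℝ) 1)),
        HasDerivAt (Z (k-1)) (Z k x + Fstar n σ p k 1 x * z x) x := by
    intro k h1 h2
    filter_upwards [hchain k h1 (by omega)] with x hx
    rwa [collapse1 k h1 h2 x] at hx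
  have FstarVal : ∀ k, 2 ≤ k → k ≤ n-2 → ∀ x,
      Fstar n σ p k 1 x = (-1:ℂ)^(k+1) * p (n-k) x := by
    intro k h1 h2 x
    simp only [Fstar, Fmat]
    rw [show n - 1 + 1 = n from by omega]
    rw [if_neg (by omega), if_neg (by omega), if_pos (by omega)]
    rw [show n - k + 1 - 1 = n - k from by omega]
    rw [show k + 1 + 1 = (k+1) + 1 from rfl, pow_succ]
    ring
  have Fstar11 : ∀ x : ℝ, Fstar n σ p 1 1 x = 0 := by
    intro x
    simp only [Fstar, Fmat]
    rw [show n - 1 + 1 = n from by omega]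
    rw [if_neg (by omega), if_neg (by omega), if_neg (by omega), mul_zero]
  have FstarN1 : ∀ x : ℝ, Fstar n σ p (n-1) 1 x = (-1:ℂ)^(n+1) * (σ x - p 1 x) := by
    intro x
    simp only [Fstar, Fmat]
    rw [show n - 1 + 1 = n from by omega, show n - (n-1) + 1 = 2 from by omega]
    rw [if_neg (by omega), if_pos (by omega)]
  have FstarCont : ∀ k, 1 ≤ k → k ≤ n-2 →
      ContinuousOn (fun x => Fstar n σ p k 1 x * z x) (Set.Ioo (0:ℝ) 1) := by
    intro k h1 h2
    rcases eq_or_lt_of_le h1 with heq | hlt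
    · apply ContinuousOn.congr (continuousOn_const (c := (0:ℂ)))
      intro x hx
      simp only [← heq, Fstar11, zero_mul]
    · have h2' : 2 ≤ k := hlt
      have hc := (hpCont (n-k) 0 (by omega) (by omega) (by omega)).mono
        Set.Ioo_subset_Icc_self
      simp only [Function.iterate_zero, id] at hc
      apply ContinuousOn.congr ((continuousOn_const (c := (-1:ℂ)^(k+1)).mul hc).mul hzc)
      intro x hx
      simp only [FstarVal k h2' h2 x, Pi.mul_apply]
  have Zev : ∀ k, 1 ≤ k → k ≤ n-2 → ∀ x ∈ Set.Ioo (0:ℝ) 1,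
      HasDerivAt (Z (k-1)) (Z k x + Fstar n σ p k 1 x * z x) x := by
    intro k h1 h2
    obtain ⟨g, hg, hrep⟩ := hAC (k-1) (by omega)
    apply rep_hasDerivAt_of_continuousOn hg hrep (chainAe k h1 (by omega))
    exact ((hZCont k (by omega)).mono Set.Ioo_subset_Icc_self).add (FstarCont k h1 h2)
  -- the main induction expressing iterated derivatives of z via the quasi-derivatives
  have main : ∀ k, k ≤ n-2 → ∀ x ∈ Set.Ioo (0:ℝ) 1,
      (∀ j, j ≤ k → deriv^[j] z x = Eaux n p z Z j x) ∧
      (∀ j, j < k → HasDerivAt (deriv^[j] z) (deriv^[j+1] z x) x) := by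
    intro k
    induction k with
    | zero =>
      intro _ x hx
      refine ⟨?_, fun j hj => absurd hj (by omega)⟩
      intro j hj
      have hj0 : j = 0 := by omega
      subst hj0
      have he : Finset.Icc 2 0 = ∅ := Finset.Icc_eq_empty (by omega)
      simp [Eaux, he, hZ0]
    | succ k IH =>
      intro hk
      have IHx := IH (by omega)
      have hDE : ∀ y ∈ Set.Ioo (0:ℝ) 1,
          HasDerivAt (Eaux n p z Z k) (Eaux n p z Z (k+1) y) y := by
        intro y hy
        have hZk : HasDerivAt (Z k) (Z (k+1) y + Fstar n σ p (k+1) 1 y * z y) y := by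
          have := Zev (k+1) (by omega) (by omega) y hy
          simpa using this
        have hSder : ∀ m ∈ Finset.Icc 2 k,
            HasDerivAt (fun u => Saux n p z (k-m) m u) (Saux n p z (k-m+1) m y) y := by
          intro m hm
          rw [Finset.mem_Icc] at hm
          have hres := hasDerivAt_leibniz_sum
            (u := fun i => deriv^[i] (p (n-m))) (w := fun j => deriv^[j] z) (t := k-m) (x := y)
            (fun i hi => hpEv (n-m) i (by omega) (by omega) (by omega) y hy)
            (fun j hj => (IHx y hy).2 j (by omega))
          have e1 : k - m + 1 + 1 = k - m + 2 := rfl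
          simp only [Saux, e1]
          exact hres
        have sum_der : HasDerivAt (fun u => Eaux n p z Z k u)
            (Z (k+1) y + Fstar n σ p (k+1) 1 y * z y
              + ∑ m ∈ Finset.Icc 2 k, (-1:ℂ)^(m+1) * Saux n p z (k-m+1) m y) y := by
          simp only [Eaux]
          apply HasDerivAt.add hZk
          apply HasDerivAt.fun_sum
          intro m hm
          exact (hSder m hm).const_mul _
        have hval : Z (k+1) y + Fstar n σ p (k+1) 1 y * z y
              + ∑ m ∈ Finset.Icc 2 k, (-1:ℂ)^(m+1) * Saux n p z (k-m+1) m y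
            = Eaux n p z Z (k+1) y := by
          rcases Nat.eq_zero_or_pos k with rfl | hkpos
          · have he1 : Finset.Icc 2 1 = ∅ := Finset.Icc_eq_empty (by omega)
            have he0 : Finset.Icc 2 0 = ∅ := Finset.Icc_eq_empty (by omega)
            simp [Eaux, he1, he0, Fstar11]
          · simp only [Eaux]
            rw [show k + 1 = k + 1 from rfl, Finset.sum_Icc_succ_top (by omega : 2 ≤ k+1)]
            have hS0 : Saux n p z (k+1-(k+1)) (k+1) y = p (n-(k+1)) y * z y := by
              simp [Saux]
            have hsum : ∑ m ∈ Finset.Icc 2 k, (-1:ℂ)^(m+1) * Saux n p z (k-m+1) m y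
                = ∑ m ∈ Finset.Icc 2 k, (-1:ℂ)^(m+1) * Saux n p z (k+1-m) m y := by
              apply Finset.sum_congr rfl
              intro m hm
              rw [Finset.mem_Icc] at hm
              rw [show k - m + 1 = k + 1 - m from by omega]
            rw [hsum, FstarVal (k+1) (by omega) (by omega) y, hS0]
            ring
        rw [← hval]
        exact sum_der
      intro x hx
      have hDk : ∀ y ∈ Set.Ioo (0:ℝ) 1,
          HasDerivAt (deriv^[k] z) (Eaux n p z Z (k+1) y) y := by
        intro y hy
        apply (hDE y hy).congr_of_eventuallyEq
        filter_upwards [isOpen_Ioo.mem_nhds hy] with u hu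
        exact (IHx u hu).1 k le_rfl
      have hderiv_eq : ∀ y ∈ Set.Ioo (0:ℝ) 1, deriv^[k+1] z y = Eaux n p z Z (k+1) y := by
        intro y hy
        rw [Function.iterate_succ_apply']
        exact (hDk y hy).deriv
      refine ⟨fun j hj => ?_, fun j hj => ?_⟩
      · rcases Nat.lt_succ_iff_lt_or_eq.mp (Nat.lt_succ_of_le hj) with h | h
        · exact (IHx x hx).1 j (by omega)
        · subst h
          exact hderiv_eq x hx
      · rcases Nat.lt_succ_iff_lt_or_eq.mp hj with h | h
        · exact (IHx x hx).2 j h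
        · subst h
          rw [hderiv_eq x hx]
          exact hDk x hx
  constructor
  · -- first statement
    have hpAeAll : ∀ᵐ x ∂(volume.restrict (Set.Ioo (0:ℝ) 1)),
        ∀ m : ℕ, ∀ d : ℕ, (2 ≤ m ∧ m ≤ n-2 ∧ d ≤ n-2-m) →
          HasDerivAt (deriv^[d] (p (n-m))) (deriv^[d+1] (p (n-m)) x) x := by
      rw [MeasureTheory.ae_all_iff]
      intro m
      rw [MeasureTheory.ae_all_iff]
      intro d
      by_cases hc : 2 ≤ m ∧ m ≤ n-2 ∧ d ≤ n-2-m
      · obtain ⟨c1, c2, c3⟩ := hc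
        filter_upwards [hpAe (n-m) d (by omega) (by omega) (by omega)] with x hx _
        exact hx
      · exact Filter.Eventually.of_forall (fun x h => absurd h hc)
    filter_upwards [chainAe (n-1) (by omega) (by omega), hpAeAll,
      ae_restrict_mem measurableSet_Ioo] with x hZd hpae hx
    have R := main (n-2) le_rfl
    have hZd' : HasDerivAt (Z (n-2)) (Z (n-1) x + Fstar n σ p (n-1) 1 x * z x) x := by
      rwa [show n - 1 - 1 = n - 2 from by omega] at hZd
    have hSder : ∀ m ∈ Finset.Icc 2 (n-2),
        HasDerivAt (fun u => Saux n p z (n-2-m) m u) (Saux n p z (n-2-m+1) m x) x := by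
      intro m hm
      rw [Finset.mem_Icc] at hm
      have hres := hasDerivAt_leibniz_sum
        (u := fun i => deriv^[i] (p (n-m))) (w := fun j => deriv^[j] z) (t := n-2-m) (x := x)
        (fun i hi => hpae m i ⟨by omega, by omega, by omega⟩)
        (fun j hj => (R x hx).2 j (by omega))
      simp only [Saux]
      exact hres
    have sum_der : HasDerivAt (fun u => Eaux n p z Z (n-2) u)
        (Z (n-1) x + Fstar n σ p (n-1) 1 x * z x
          + ∑ m ∈ Finset.Icc 2 (n-2), (-1:ℂ)^(m+1) * Saux n p z (n-2-m+1) m x) x := by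
      simp only [Eaux]
      exact hZd'.add (HasDerivAt.fun_sum (fun m hm => (hSder m hm).const_mul _))
    have hDk : HasDerivAt (deriv^[n-2] z)
        (Z (n-1) x + Fstar n σ p (n-1) 1 x * z x
          + ∑ m ∈ Finset.Icc 2 (n-2), (-1:ℂ)^(m+1) * Saux n p z (n-2-m+1) m x) x := by
      apply sum_der.congr_of_eventuallyEq
      filter_upwards [isOpen_Ioo.mem_nhds hx] with u hu
      exact (R u hu).1 (n-2) le_rfl
    have hder : deriv^[n-1] z x
        = Z (n-1) x + Fstar n σ p (n-1) 1 x * z x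
          + ∑ m ∈ Finset.Icc 2 (n-2), (-1:ℂ)^(m+1) * Saux n p z (n-2-m+1) m x := by
      conv_lhs => rw [show n - 1 = (n-2)+1 from by omega, Function.iterate_succ_apply']
      exact hDk.deriv
    have hswap : (∑ j ∈ Finset.range (n-2),
          (∑ s ∈ Finset.Icc j (n-3),
            (-1 : ℂ)^(s+n-1) * (Nat.choose s j : ℂ) * deriv^[s-j] (p (s+1)) x)
          * deriv^[j] z x)
        = ∑ m ∈ Finset.Icc 2 (n-1), (-1:ℂ)^m * Saux n p z (n-1-m) m x := by
      rw [swap_identity n hn (fun i d => deriv^[d] (p i) x) (fun j => deriv^[j] z x)]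
      apply Finset.sum_congr rfl
      intro m hm
      simp only [Saux]
    have hsplit : ∑ m ∈ Finset.Icc 2 (n-1), (-1:ℂ)^m * Saux n p z (n-1-m) m x
        = ∑ m ∈ Finset.Icc 2 (n-2), (-1:ℂ)^m * Saux n p z (n-1-m) m x
          + (-1:ℂ)^(n-1) * (p 1 x * z x) := by
      rw [show n - 1 = (n-2)+1 from by omega, Finset.sum_Icc_succ_top (by omega : 2 ≤ (n-2)+1)]
      congr 1
      rw [show (n-2)+1 = n-1 from by omega]
      rw [show n-1-(n-1) = 0 from by omega]
      have : Saux n p z 0 (n-1) x = p 1 x * z x := by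
        simp [Saux, show n-(n-1) = 1 from by omega]
      rw [this]
    have hidx : ∑ m ∈ Finset.Icc 2 (n-2), (-1:ℂ)^(m+1) * Saux n p z (n-2-m+1) m x
        = ∑ m ∈ Finset.Icc 2 (n-2), (-1:ℂ)^(m+1) * Saux n p z (n-1-m) m x := by
      apply Finset.sum_congr rfl
      intro m hm
      rw [Finset.mem_Icc] at hm
      rw [show n-2-m+1 = n-1-m from by omega]
    have hpair : ∑ m ∈ Finset.Icc 2 (n-2), (-1:ℂ)^(m+1) * Saux n p z (n-1-m) m x
        + ∑ m ∈ Finset.Icc 2 (n-2), (-1:ℂ)^m * Saux n p z (n-1-m) m x = 0 := by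
      rw [← Finset.sum_add_distrib]
      apply Finset.sum_eq_zero
      intro m hm
      rw [pow_succ]
      ring
    have hpow : (-1:ℂ)^(n-1) = (-1:ℂ)^(n+1) := by
      rw [show n + 1 = (n-1)+2 from by omega, pow_add]
      ring
    rw [hder, hidx, hswap, hsplit, FstarN1 x, hpow]
    linear_combination -hpair
  · -- second statement
    have collapse2 : ∀ x : ℝ, ∑ j ∈ Finset.Icc 1 n, Fstar n σ p n j x * Z (j-1) x
        = Fstar n σ p n 2 x * Z 1 x := by
      intro x
      have := Finset.sum_eq_single_of_mem (f := fun j => Fstar n σ p n j x * Z (j-1) x)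
        (s := Finset.Icc 1 n) 2 (by rw [Finset.mem_Icc]; omega) ?_
      · simpa using this
      · intro j hj hne
        rw [Finset.mem_Icc] at hj
        have hF : Fstar n σ p n j x = 0 := by
          simp only [Fstar, Fmat]
          rw [show n - n + 1 = 1 from by omega]
          rw [if_neg (by omega), if_neg (by omega), if_neg (by omega), mul_zero]
        simp only [hF, zero_mul]
    have hFn2 : ∀ x : ℝ, Fstar n σ p n 2 x = (-1:ℂ)^n * σ x := by
      intro x
      simp only [Fstar, Fmat]
      rw [show n - 2 + 1 = n - 1 from by omega, show n - n + 1 = 1 from by omega]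
      rw [if_pos (by omega)]
      rw [show n + 2 + 1 = n + 3 from rfl, pow_add]
      ring
    filter_upwards [hchain n (by omega) le_rfl, ae_restrict_mem measurableSet_Ioo]
      with x hx hmem
    rw [collapse2 x] at hx
    have hd : deriv (Z (n-1)) x = Z n x + Fstar n σ p n 2 x * Z 1 x := hx.deriv
    have hz1 : Z 1 x = deriv z x := by
      have hm := (main (n-2) le_rfl x hmem).1 1 (by omega)
      have he : Finset.Icc 2 1 = ∅ := Finset.Icc_eq_empty (by omega)
      simp only [Eaux, he, Finset.sum_empty, add_zero, Function.iterate_one] at hm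
      exact hm.symm
    rw [hd, hFn2, hz1, pow_succ]
    ring
end
end

section
/- Let y ∈ D_F and z ∈ D_{F⋆}. Then the Lagrange bracket admits the representation ⟨z, y⟩ = Σ_{k=0}^{n−1} (−1)^{n−k−1} z^(n−k−1) y^(k) + Σ_{k=0}^{n−3} y^(k) Σ_{j=0}^{n−k−3} ( Σ_{s=j}^{n−k−3} (−1)^s C(s,j) p_{s+k+1}^{(s−j)} ) z^(j) almost everywhere on (0,1), where C(s,j) denotes the binomial coefficient s!/(j!(s−j)!) and all derivatives on the right-hand side are classical (regular) derivatives, which exist since y, z ∈ W_1^{n−1}[0,1] and p_k ∈ W_2^{k−1}[0,1]. -/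
open MeasureTheory

noncomputable section

section S7Helpers
open Set Filter Topology intervalIntegral Finset

lemma s7_avg_tendsto (g : ℝ → ℂ) (hg : Integrable g (volume : Measure ℝ)) :
    ∀ᵐ x ∂(volume : Measure ℝ), Tendsto (fun r : ℝ => ⨍ y in Metric.closedBall x r, g y) (𝓝[>] 0) (𝓝 (g x)) := by
  filter_upwards [IsUnifLocDoublingMeasure.ae_tendsto_average (μ := (volume : Measure ℝ)) hg.locallyIntegrable 1] with x hx
  refine hx (fun _ => x) id tendsto_id ?_
  filter_upwards [self_mem_nhdsWithin] with r hr
  exact Metric.mem_closedBall_self (by simpa using le_of_lt hr)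

lemma s7_symm_quot_tendsto {h : ℝ → ℂ} {x : ℝ} {c : ℂ} (hd : HasDerivAt h c x) :
    Tendsto (fun r : ℝ => ((2*r : ℝ) : ℂ)⁻¹ * (h (x+r) - h (x-r))) (𝓝[>] 0) (𝓝 c) := by
  have hslope := hasDerivAt_iff_tendsto_slope.1 hd
  have hadd : Tendsto (fun r : ℝ => x + r) (𝓝[>] 0) (𝓝 x) := by
    have : Tendsto (fun r : ℝ => x + r) (𝓝 0) (𝓝 x) := by
      simpa using (tendsto_const_nhds (x := x)).add (tendsto_id (x := 𝓝 (0:ℝ)))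
    exact this.mono_left nhdsWithin_le_nhds
  have hsub : Tendsto (fun r : ℝ => x - r) (𝓝[>] 0) (𝓝 x) := by
    have : Tendsto (fun r : ℝ => x - r) (𝓝 0) (𝓝 x) := by
      simpa using (tendsto_const_nhds (x := x)).sub (tendsto_id (x := 𝓝 (0:ℝ)))
    exact this.mono_left nhdsWithin_le_nhds
  have h1 : Tendsto (fun r : ℝ => x + r) (𝓝[>] 0) (𝓝[≠] x) := by
    apply tendsto_nhdsWithin_of_tendsto_nhds_of_eventually_within _ hadd
    filter_upwards [self_mem_nhdsWithin] with r hr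
    simp only [mem_compl_iff, mem_singleton_iff]
    intro hc; exact (ne_of_gt (show (0:ℝ) < r from hr)) (by linarith)
  have h2 : Tendsto (fun r : ℝ => x - r) (𝓝[>] 0) (𝓝[≠] x) := by
    apply tendsto_nhdsWithin_of_tendsto_nhds_of_eventually_within _ hsub
    filter_upwards [self_mem_nhdsWithin] with r hr
    simp only [mem_compl_iff, mem_singleton_iff]
    intro hc; exact (ne_of_gt (show (0:ℝ) < r from hr)) (by linarith)
  have htot : Tendsto (fun r : ℝ => ((1:ℂ)/2) * (slope h x (x+r) + slope h x (x-r)))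
      (𝓝[>] 0) (𝓝 c) := by
    have h3 := ((hslope.comp h1).add (hslope.comp h2)).const_mul ((1:ℂ)/2)
    have : (1:ℂ)/2 * (c + c) = c := by ring
    rw [this] at h3
    exact h3.congr (fun r => by simp [Function.comp])
  refine htot.congr' ?_
  filter_upwards [self_mem_nhdsWithin] with r hr
  have hr0 : (r:ℝ) ≠ 0 := ne_of_gt hr
  have hrC : (r:ℂ) ≠ 0 := by exact_mod_cast hr0
  have e1 : slope h x (x+r) = ((r:ℝ):ℂ)⁻¹ * (h (x+r) - h x) := by
    rw [slope_def_module]; simp [Complex.real_smul]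
  have e2 : slope h x (x-r) = ((-r:ℝ):ℂ)⁻¹ * (h (x-r) - h x) := by
    rw [slope_def_module]; simp [Complex.real_smul]
  rw [e1, e2]
  push_cast
  field_simp
  ring

lemma s7_monotone_primitive {u : ℝ → ℝ} (hu : Integrable u volume) (hpos : ∀ t, 0 ≤ u t) :
    Monotone (fun t => ∫ s in (0:ℝ)..t, u s) := by
  intro a b hab
  have h1 : (∫ s in (0:ℝ)..b, u s) - (∫ s in (0:ℝ)..a, u s) = ∫ s in a..b, u s :=
    integral_interval_sub_left hu.intervalIntegrable hu.intervalIntegrable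
  have h2 : (0:ℝ) ≤ ∫ s in a..b, u s := intervalIntegral.integral_nonneg hab (fun t _ => hpos t)
  linarith

lemma s7_ae_hasDerivAt_primitive {g : ℝ → ℂ} (hg : IntegrableOn g (Icc (0:ℝ) 1)) :
    ∀ᵐ x ∂(volume.restrict (Ioo (0:ℝ) 1)),
      HasDerivAt (fun t => ∫ s in (0:ℝ)..t, g s) (g x) x := by
  set g' : ℝ → ℂ := (Icc (0:ℝ) 1).indicator g with hg'def
  have hg' : Integrable g' volume := (integrable_indicator_iff measurableSet_Icc).2 hg
  set G : ℝ → ℂ := fun t => ∫ s in (0:ℝ)..t, g' s with hGdef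
  have hre : Integrable (fun t => (g' t).re) volume := hg'.re
  have him : Integrable (fun t => (g' t).im) volume := hg'.im
  have hrep : Integrable (fun t => max (g' t).re 0) volume := hre.pos_part
  have hren : Integrable (fun t => max (-(g' t).re) 0) volume := hre.neg.pos_part
  have himp : Integrable (fun t => max (g' t).im 0) volume := him.pos_part
  have himn : Integrable (fun t => max (-(g' t).im) 0) volume := him.neg.pos_part
  set A : ℝ → ℝ := fun t => ∫ s in (0:ℝ)..t, max (g' s).re 0 with hA
  set B : ℝ → ℝ := fun t => ∫ s in (0:ℝ)..t, max (-(g' s).re) 0 with hB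
  set C : ℝ → ℝ := fun t => ∫ s in (0:ℝ)..t, max (g' s).im 0 with hC
  set D : ℝ → ℝ := fun t => ∫ s in (0:ℝ)..t, max (-(g' s).im) 0 with hD
  have hmA : Monotone A := s7_monotone_primitive hrep (fun t => le_max_right _ _)
  have hmB : Monotone B := s7_monotone_primitive hren (fun t => le_max_right _ _)
  have hmC : Monotone C := s7_monotone_primitive himp (fun t => le_max_right _ _)
  have hmD : Monotone D := s7_monotone_primitive himn (fun t => le_max_right _ _)
  -- pointwise identity
  have hGid : ∀ t : ℝ, G t = ((A t - B t : ℝ) : ℂ) + ((C t - D t : ℝ) : ℂ) * Complex.I := by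
    intro t
    have e1 : A t - B t = ∫ s in (0:ℝ)..t, (g' s).re := by
      rw [hA, hB, ← intervalIntegral.integral_sub hrep.intervalIntegrable hren.intervalIntegrable]
      congr 1; funext s; exact max_zero_sub_max_neg_zero_eq_self _
    have e2 : C t - D t = ∫ s in (0:ℝ)..t, (g' s).im := by
      rw [hC, hD, ← intervalIntegral.integral_sub himp.intervalIntegrable himn.intervalIntegrable]
      congr 1; funext s; exact max_zero_sub_max_neg_zero_eq_self _
    calc G t = ∫ s in (0:ℝ)..t, (((g' s).re:ℂ) + ((g' s).im:ℂ) * Complex.I) := by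
          rw [hGdef]
          apply intervalIntegral.integral_congr
          intro s _
          exact (Complex.re_add_im (g' s)).symm
      _ = (∫ s in (0:ℝ)..t, ((g' s).re:ℂ)) + ∫ s in (0:ℝ)..t, (((g' s).im:ℂ) * Complex.I) :=
          intervalIntegral.integral_add (hre.ofReal.intervalIntegrable) ((him.ofReal.mul_const _).intervalIntegrable)
      _ = ((A t - B t : ℝ):ℂ) + ((C t - D t : ℝ):ℂ) * Complex.I := by
          rw [intervalIntegral.integral_mul_const, intervalIntegral.integral_ofReal,
            intervalIntegral.integral_ofReal, e1, e2]
  have hGfun : G = fun t => ((A t - B t : ℝ) : ℂ) + ((C t - D t : ℝ) : ℂ) * Complex.I :=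
    funext hGid
  -- a.e. there is a derivative of G, whose value is g' x by averages
  have main : ∀ᵐ x ∂(volume : Measure ℝ), HasDerivAt G (g' x) x := by
    filter_upwards [hmA.ae_differentiableAt, hmB.ae_differentiableAt, hmC.ae_differentiableAt,
      hmD.ae_differentiableAt, s7_avg_tendsto g' hg'] with x hxA hxB hxC hxD hxavg
    set c : ℂ := ((deriv A x - deriv B x : ℝ) : ℂ) + ((deriv C x - deriv D x : ℝ) : ℂ) * Complex.I with hc
    have hGd : HasDerivAt G c x := by
      rw [hGfun]
      exact ((hxA.hasDerivAt.sub hxB.hasDerivAt).ofReal_comp).add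
        (((hxC.hasDerivAt.sub hxD.hasDerivAt).ofReal_comp).mul_const Complex.I)
    have h1 : Tendsto (fun r : ℝ => ((2*r : ℝ) : ℂ)⁻¹ * (G (x+r) - G (x-r))) (𝓝[>] 0) (𝓝 c) :=
      s7_symm_quot_tendsto hGd
    have h2 : Tendsto (fun r : ℝ => ((2*r : ℝ) : ℂ)⁻¹ * (G (x+r) - G (x-r))) (𝓝[>] 0) (𝓝 (g' x)) := by
      refine hxavg.congr' ?_
      filter_upwards [self_mem_nhdsWithin] with r hr
      have hr0 : (0:ℝ) < r := hr
      have hle : x - r ≤ x + r := by linarith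
      rw [setAverage_eq, Real.closedBall_eq_Icc]
      have hv : volume (Icc (x-r) (x+r)) = ENNReal.ofReal (2*r) := by
        rw [Real.volume_Icc]; congr 1; ring
      have hint : ∫ y in Icc (x-r) (x+r), g' y = G (x+r) - G (x-r) := by
        rw [integral_Icc_eq_integral_Ioc, ← intervalIntegral.integral_of_le hle, hGdef]
        exact (integral_interval_sub_left hg'.intervalIntegrable hg'.intervalIntegrable).symm
      rw [measureReal_def, hv, hint, ENNReal.toReal_ofReal (by linarith), Complex.real_smul]
      push_cast
      ring
    have := tendsto_nhds_unique h1 h2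
    rwa [this] at hGd
  -- transfer to the primitive of g on Ioo
  have hEq : EqOn (fun t => ∫ s in (0:ℝ)..t, g s) G (Icc (0:ℝ) 1) := by
    intro t ht
    rw [hGdef]
    refine (intervalIntegral.integral_congr ?_).symm
    intro s hs
    rw [uIcc_of_le ht.1] at hs
    exact indicator_of_mem (mem_of_mem_of_subset hs (Icc_subset_Icc le_rfl ht.2)) g
  filter_upwards [ae_restrict_of_ae main, ae_restrict_mem measurableSet_Ioo] with x hx hmem
  have : HasDerivAt (fun t => ∫ s in (0:ℝ)..t, g s) (g' x) x := by
    refine hx.congr_of_eventuallyEq ?_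
    filter_upwards [Ioo_mem_nhds hmem.1 hmem.2] with t ht
    exact hEq (mem_of_mem_of_subset ht Ioo_subset_Icc_self)
  rwa [hg'def, indicator_of_mem (mem_of_mem_of_subset hmem Ioo_subset_Icc_self) g] at this

lemma s7_hasDerivAt_congr_Ioo {A B : ℝ → ℂ} (hAB : Set.EqOn B A (Set.Ioo (0:ℝ) 1)) {x : ℝ}
    (hx : x ∈ Set.Ioo (0:ℝ) 1) {c : ℂ} (hB : HasDerivAt A c x) : HasDerivAt B c x := by
  refine hB.congr_of_eventuallyEq ?_
  filter_upwards [Ioo_mem_nhds hx.1 hx.2] with t ht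
  exact hAB ht

lemma ACOn01.continuousOn {h : ℝ → ℂ} (hh : ACOn01 h) : ContinuousOn h (Icc (0:ℝ) 1) := by
  obtain ⟨g, hgint, hrep⟩ := hh
  have : ContinuousOn (fun x => h 0 + ∫ t in (0:ℝ)..x, g t) (Icc (0:ℝ) 1) := by
    refine (continuousOn_const.add ?_)
    have := intervalIntegral.continuousOn_primitive_interval
      (f := g) (μ := volume) (a := (0:ℝ)) (b := 1)
      (by simpa [uIcc_of_le (zero_le_one' ℝ)] using hgint)
    simpa [uIcc_of_le (zero_le_one' ℝ)] using this
  exact this.congr hrep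

lemma ACOn01.ae_hasDerivAt {h : ℝ → ℂ} (hh : ACOn01 h) :
    ∀ᵐ x ∂(volume.restrict (Ioo (0:ℝ) 1)),
      HasDerivAt h (deriv h x) x := by
  obtain ⟨g, hgint, hrep⟩ := hh
  filter_upwards [s7_ae_hasDerivAt_primitive hgint, ae_restrict_mem measurableSet_Ioo] with x hx hmem
  have hd := (hasDerivAt_const x (h 0)).add hx
  rw [zero_add] at hd
  have h1 : HasDerivAt h (g x) x := by
    refine s7_hasDerivAt_congr_Ioo ?_ hmem hd
    intro t ht
    exact hrep t (mem_of_mem_of_subset ht Ioo_subset_Icc_self)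
  simpa [h1.deriv] using h1

lemma ACOn01.hasDerivAt_of_ae {h u : ℝ → ℂ} (hh : ACOn01 h)
    (hu : ContinuousOn u (Set.Icc (0:ℝ) 1))
    (hae : ∀ᵐ x ∂(volume.restrict (Ioo (0:ℝ) 1)), HasDerivAt h (u x) x) :
    ∀ x ∈ Set.Ioo (0:ℝ) 1, HasDerivAt h (u x) x := by
  obtain ⟨g, hgint, hrep⟩ := hh
  -- a.e. HasDerivAt h (g x)
  have hg_ae : ∀ᵐ x ∂(volume.restrict (Ioo (0:ℝ) 1)), HasDerivAt h (g x) x := by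
    filter_upwards [s7_ae_hasDerivAt_primitive hgint, ae_restrict_mem measurableSet_Ioo] with x hx hmem
    have hd := (hasDerivAt_const x (h 0)).add hx
    rw [zero_add] at hd
    refine s7_hasDerivAt_congr_Ioo ?_ hmem hd
    intro t ht
    exact hrep t (mem_of_mem_of_subset ht Ioo_subset_Icc_self)
  -- g = u a.e. on Ioo
  have hgu : ∀ᵐ x ∂(volume : Measure ℝ), x ∈ Ioo (0:ℝ) 1 → g x = u x := by
    rw [← ae_restrict_iff' measurableSet_Ioo]
    filter_upwards [hg_ae, hae] with x h1 h2
    exact h1.unique h2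
  -- the primitive of g equals primitive of u on [0,1]
  have hne1 : ∀ᵐ x ∂(volume : Measure ℝ), x ≠ (1:ℝ) := by
    refine ae_iff.2 ?_
    simpa using Real.volume_singleton (x := (1:ℝ))
  have hprim : ∀ t ∈ Icc (0:ℝ) 1, (∫ s in (0:ℝ)..t, g s) = ∫ s in (0:ℝ)..t, u s := by
    intro t ht
    apply intervalIntegral.integral_congr_ae
    filter_upwards [hgu, hne1] with s hs hs1 hsmem
    rw [uIoc_of_le ht.1] at hsmem
    have : s ∈ Ioo (0:ℝ) 1 := ⟨hsmem.1, lt_of_le_of_ne (le_trans hsmem.2 ht.2) hs1⟩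
    exact hs this
  intro x hx
  have hhu : ∀ t ∈ Icc (0:ℝ) 1, h t = h 0 + ∫ s in (0:ℝ)..t, u s := by
    intro t ht
    rw [hrep t ht, hprim t ht]
  have hint : IntervalIntegrable u volume 0 x :=
    (hu.mono (by rw [uIcc_of_le hx.1.le]; exact Icc_subset_Icc le_rfl hx.2.le)).intervalIntegrable
  have hmeas : StronglyMeasurableAtFilter u (𝓝 x) := by
    refine ContinuousOn.stronglyMeasurableAtFilter isOpen_Ioo ?_ x hx
    exact hu.mono Ioo_subset_Icc_self
  have hca : ContinuousAt u x := hu.continuousAt (Icc_mem_nhds hx.1 hx.2)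
  have hD : HasDerivAt (fun t => h 0 + ∫ s in (0:ℝ)..t, u s) (u x) x := by
    have := intervalIntegral.integral_hasDerivAt_right hint hmeas hca
    have h' := (hasDerivAt_const x (h 0)).add this
    rw [zero_add] at h'
    exact h'
  refine s7_hasDerivAt_congr_Ioo ?_ hx hD
  intro t ht
  exact hhu t (mem_of_mem_of_subset ht Ioo_subset_Icc_self)

lemma s7_combR (m' : ℕ) (Q : ℕ → ℕ → ℂ) (Zv : ℕ → ℂ) :
    ∑ j ∈ Finset.range (m'+2),
        (∑ s ∈ Finset.range (m'+2), (-1:ℂ)^s * (s.choose j : ℂ) * Q s (s-j)) * Zv j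
    = Q 0 0 * Zv 0
      - (∑ j ∈ Finset.range (m'+1),
          ((∑ s ∈ Finset.range (m'+1), (-1:ℂ)^s * (s.choose j : ℂ) * Q (s+1) (s-j+1)) * Zv j
           + (∑ s ∈ Finset.range (m'+1), (-1:ℂ)^s * (s.choose j : ℂ) * Q (s+1) (s-j)) * Zv (j+1))) := by
  have peel : ∀ j, (∑ s ∈ Finset.range (m'+2), (-1:ℂ)^s * (s.choose j : ℂ) * Q s (s-j))
      = (∑ s ∈ Finset.range (m'+1), (-1:ℂ)^(s+1) * (((s+1).choose j : ℕ) : ℂ) * Q (s+1) (s+1-j))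
        + (if j = 0 then Q 0 0 else 0) := by
    intro j
    rw [Finset.sum_range_succ']
    congr 1
    by_cases hj : j = 0
    · simp [hj]
    · simp [hj, Nat.choose_eq_zero_of_lt (Nat.pos_of_ne_zero hj)]
  have pascal : ∀ s j, (-1:ℂ)^(s+1) * (((s+1).choose j : ℕ) : ℂ)
      = -((-1:ℂ)^s * (s.choose j : ℂ) + (-1:ℂ)^s * (if j = 0 then 0 else (s.choose (j-1) : ℂ))) := by
    intro s j
    cases j with
    | zero => simp [pow_succ]
    | succ jj =>
        simp only [Nat.choose_succ_succ, Nat.cast_add, Nat.succ_sub_one, if_neg (Nat.succ_ne_zero jj)]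
        push_cast
        ring
  have hT1 : (∑ j ∈ Finset.range (m'+2),
      (∑ s ∈ Finset.range (m'+1), (-1:ℂ)^s * (s.choose j : ℂ) * Q (s+1) (s+1-j)) * Zv j)
      = ∑ j ∈ Finset.range (m'+1),
      (∑ s ∈ Finset.range (m'+1), (-1:ℂ)^s * (s.choose j : ℂ) * Q (s+1) (s-j+1)) * Zv j := by
    rw [Finset.sum_range_succ]
    have hlast : (∑ s ∈ Finset.range (m'+1), (-1:ℂ)^s * ((s.choose (m'+1) : ℕ) : ℂ) * Q (s+1) (s+1-(m'+1))) = 0 := by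
      apply Finset.sum_eq_zero
      intro s hs
      rw [Finset.mem_range] at hs
      simp [Nat.choose_eq_zero_of_lt (by omega : s < m'+1)]
    rw [hlast, zero_mul, add_zero]
    refine Finset.sum_congr rfl fun j _ => ?_
    congr 1
    refine Finset.sum_congr rfl fun s _ => ?_
    by_cases hjs : j ≤ s
    · have e : s + 1 - j = s - j + 1 := by omega
      rw [e]
    · simp [Nat.choose_eq_zero_of_lt (by omega : s < j)]
  have hT2 : (∑ j ∈ Finset.range (m'+2),
      (∑ s ∈ Finset.range (m'+1), (-1:ℂ)^s * (if j = 0 then 0 else (s.choose (j-1) : ℂ)) * Q (s+1) (s+1-j)) * Zv j)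
      = ∑ j ∈ Finset.range (m'+1),
      (∑ s ∈ Finset.range (m'+1), (-1:ℂ)^s * (s.choose j : ℂ) * Q (s+1) (s-j)) * Zv (j+1) := by
    rw [Finset.sum_range_succ']
    have h0 : (∑ s ∈ Finset.range (m'+1), (-1:ℂ)^s * (if (0:ℕ) = 0 then 0 else (s.choose (0-1) : ℂ)) * Q (s+1) (s+1-0)) * Zv 0 = 0 := by
      simp
    rw [h0, add_zero]
    refine Finset.sum_congr rfl fun j _ => ?_
    congr 1
    refine Finset.sum_congr rfl fun s _ => ?_
    simp only [if_neg (Nat.succ_ne_zero j), Nat.succ_sub_one, Nat.succ_sub_succ, Nat.sub_zero]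
  calc
    ∑ j ∈ Finset.range (m'+2),
        (∑ s ∈ Finset.range (m'+2), (-1:ℂ)^s * (s.choose j : ℂ) * Q s (s-j)) * Zv j
      = (∑ j ∈ Finset.range (m'+2),
          (∑ s ∈ Finset.range (m'+1), (-1:ℂ)^(s+1) * (((s+1).choose j : ℕ) : ℂ) * Q (s+1) (s+1-j)) * Zv j)
        + ∑ j ∈ Finset.range (m'+2), (if j = 0 then Q 0 0 else 0) * Zv j := by
        rw [← Finset.sum_add_distrib]
        exact Finset.sum_congr rfl fun j _ => by rw [peel j, add_mul]
    _ = (∑ j ∈ Finset.range (m'+2),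
          (∑ s ∈ Finset.range (m'+1), (-1:ℂ)^(s+1) * (((s+1).choose j : ℕ) : ℂ) * Q (s+1) (s+1-j)) * Zv j)
        + Q 0 0 * Zv 0 := by
        congr 1
        rw [Finset.sum_eq_single 0]
        · simp
        · intro j _ hj; simp [hj]
        · intro h; exact absurd (Finset.mem_range.2 (by omega)) h
    _ = -((∑ j ∈ Finset.range (m'+2),
            (∑ s ∈ Finset.range (m'+1), (-1:ℂ)^s * (s.choose j : ℂ) * Q (s+1) (s+1-j)) * Zv j)
          + (∑ j ∈ Finset.range (m'+2),
            (∑ s ∈ Finset.range (m'+1), (-1:ℂ)^s * (if j = 0 then 0 else (s.choose (j-1) : ℂ)) * Q (s+1) (s+1-j)) * Zv j))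
        + Q 0 0 * Zv 0 := by
        congr 1
        rw [← Finset.sum_add_distrib, ← Finset.sum_neg_distrib]
        refine Finset.sum_congr rfl fun j _ => ?_
        rw [← add_mul, ← neg_mul, ← Finset.sum_add_distrib, ← Finset.sum_neg_distrib]
        congr 1
        refine Finset.sum_congr rfl fun s _ => ?_
        rw [pascal s j]
        ring
    _ = Q 0 0 * Zv 0
      - (∑ j ∈ Finset.range (m'+1),
          ((∑ s ∈ Finset.range (m'+1), (-1:ℂ)^s * (s.choose j : ℂ) * Q (s+1) (s-j+1)) * Zv j
           + (∑ s ∈ Finset.range (m'+1), (-1:ℂ)^s * (s.choose j : ℂ) * Q (s+1) (s-j)) * Zv (j+1))) := by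
        rw [hT1, hT2, Finset.sum_add_distrib]
        ring

lemma s7_sum_Icc_eq_rangex (N j : ℕ) (P : ℕ → ℕ → ℂ) :
    ∑ s ∈ Finset.Icc j N, (-1:ℂ)^s * (s.choose j : ℂ) * P s (s-j)
    = ∑ s ∈ Finset.range (N+1), (-1:ℂ)^s * (s.choose j : ℂ) * P s (s-j) := by
  apply Finset.sum_subset
  · intro s hs; rw [Finset.mem_Icc] at hs; exact Finset.mem_range.2 (by omega)
  · intro s hs hns
    rw [Finset.mem_range] at hs
    rw [Finset.mem_Icc] at hns
    have hlt : s < j := by omega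
    simp [Nat.choose_eq_zero_of_lt hlt]

lemma s7_combStep (m : ℕ) (hm : 1 ≤ m) (Q : ℕ → ℕ → ℂ) (Zv : ℕ → ℂ) :
    ∑ j ∈ Finset.range m,
        (∑ s ∈ Finset.Icc j (m-1), (-1:ℂ)^s * (s.choose j : ℂ) * Q s (s-j)) * Zv j
    = Q 0 0 * Zv 0
      - (∑ j ∈ Finset.range (m-1),
          ((∑ s ∈ Finset.Icc j (m-2), (-1:ℂ)^s * (s.choose j : ℂ) * Q (s+1) (s-j+1)) * Zv j
           + (∑ s ∈ Finset.Icc j (m-2), (-1:ℂ)^s * (s.choose j : ℂ) * Q (s+1) (s-j)) * Zv (j+1))) := by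
  match m, hm with
  | 1, _ => simp
  | (m'+2), _ =>
    have h1 : m' + 2 - 1 = m' + 1 := by omega
    have h2 : m' + 2 - 2 = m' := by omega
    rw [h1, h2]
    calc
      ∑ j ∈ Finset.range (m'+2),
          (∑ s ∈ Finset.Icc j (m'+1), (-1:ℂ)^s * (s.choose j : ℂ) * Q s (s-j)) * Zv j
        = ∑ j ∈ Finset.range (m'+2),
          (∑ s ∈ Finset.range (m'+2), (-1:ℂ)^s * (s.choose j : ℂ) * Q s (s-j)) * Zv j :=
          Finset.sum_congr rfl fun j _ => by rw [s7_sum_Icc_eq_rangex (m'+1) j Q]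
      _ = Q 0 0 * Zv 0
          - (∑ j ∈ Finset.range (m'+1),
            ((∑ s ∈ Finset.range (m'+1), (-1:ℂ)^s * (s.choose j : ℂ) * Q (s+1) (s-j+1)) * Zv j
             + (∑ s ∈ Finset.range (m'+1), (-1:ℂ)^s * (s.choose j : ℂ) * Q (s+1) (s-j)) * Zv (j+1))) :=
          s7_combR m' Q Zv
      _ = Q 0 0 * Zv 0
          - (∑ j ∈ Finset.range (m'+1),
            ((∑ s ∈ Finset.Icc j m', (-1:ℂ)^s * (s.choose j : ℂ) * Q (s+1) (s-j+1)) * Zv j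
             + (∑ s ∈ Finset.Icc j m', (-1:ℂ)^s * (s.choose j : ℂ) * Q (s+1) (s-j)) * Zv (j+1))) := by
          congr 1
          refine Finset.sum_congr rfl fun j _ => ?_
          congr 1
          · congr 1
            exact (s7_sum_Icc_eq_rangex m' j (fun s i => Q (s+1) (i+1))).symm
          · congr 1
            exact (s7_sum_Icc_eq_rangex m' j (fun s i => Q (s+1) i)).symm

end S7Helpers

def s7R (n : ℕ) (p : ℕ → ℝ → ℂ) (z : ℝ → ℂ) (m : ℕ) (t : ℝ) : ℂ :=
  ∑ j ∈ Finset.range (m-1),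
    (∑ s ∈ Finset.Icc j (m-2), (-1:ℂ)^s * (s.choose j : ℂ) * deriv^[s-j] (p (n-m+s)) t)
      * deriv^[j] z t

section S7Main
open Set Filter Topology intervalIntegral

theorem statement7
    (n : ℕ) (hn : 3 ≤ n)
    (σ : ℝ → ℂ) (hσ : MemLp σ 2 (volume.restrict (Set.Icc (0:ℝ) 1)))
    (p : ℕ → ℝ → ℂ) (hp : ∀ k : ℕ, 1 ≤ k → k ≤ n - 2 → MemW2 (k-1) (p k))
    (y : ℝ → ℂ) (Y : ℕ → ℝ → ℂ) (hY0 : Y 0 = y)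
    (hY : QuasiChain n (Fmat n σ p) Y)
    (z : ℝ → ℂ) (Z : ℕ → ℝ → ℂ) (hZ0 : Z 0 = z)
    (hZ : QuasiChain n (Fstar n σ p) Z) :
    ∀ᵐ x ∂(volume.restrict (Set.Ioo (0:ℝ) 1)),
      ∑ k ∈ Finset.range n, (-1 : ℂ)^k * Z k x * Y (n-k-1) x
      = (∑ k ∈ Finset.range n,
          (-1 : ℂ)^(n-k-1) * deriv^[n-k-1] z x * deriv^[k] y x)
        + ∑ k ∈ Finset.range (n-2), deriv^[k] y x
            * ∑ j ∈ Finset.range (n-k-2),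
                (∑ s ∈ Finset.Icc j (n-k-3),
                  (-1 : ℂ)^s * (Nat.choose s j : ℂ) * deriv^[s-j] (p (s+k+1)) x)
                * deriv^[j] z x := by
  obtain ⟨hYac, hYrec⟩ := hY
  obtain ⟨hZac, hZrec⟩ := hZ
  -- row computations for F
  have Frow0 : ∀ k, 1 ≤ k → k ≤ n-2 → ∀ x : ℝ,
      (∑ j ∈ Finset.Icc 1 k, Fmat n σ p k j x * Y (j-1) x) = 0 := by
    intro k hk1 hk2 x
    apply Finset.sum_eq_zero
    intro j hj
    rw [Finset.mem_Icc] at hj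
    have e : Fmat n σ p k j x = 0 := by
      unfold Fmat
      rw [if_neg (by omega : ¬(k = n-1 ∧ j = 1)), if_neg (by omega : ¬(k = n ∧ j = 2)),
        if_neg (by omega : ¬(k = n ∧ 3 ≤ j ∧ j ≤ n-1))]
    rw [e, zero_mul]
  have FrowTop : ∀ x : ℝ,
      (∑ j ∈ Finset.Icc 1 (n-1), Fmat n σ p (n-1) j x * Y (j-1) x) = -(σ x * y x) := by
    intro x
    rw [Finset.sum_eq_single 1]
    · have e : Fmat n σ p (n-1) 1 x = -σ x := by
        unfold Fmat
        rw [if_pos (⟨rfl, rfl⟩ : n-1 = n-1 ∧ (1:ℕ) = 1)]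
      rw [e]
      simp [hY0]
    · intro j hj hne
      rw [Finset.mem_Icc] at hj
      have e : Fmat n σ p (n-1) j x = 0 := by
        unfold Fmat
        rw [if_neg (by omega : ¬(n-1 = n-1 ∧ j = 1)), if_neg (by omega : ¬(n-1 = n ∧ j = 2)),
          if_neg (by omega : ¬(n-1 = n ∧ 3 ≤ j ∧ j ≤ n-1))]
      rw [e, zero_mul]
    · intro h
      exact absurd (Finset.mem_Icc.2 (by omega)) h
  -- row computations for Fstar
  have Fsrow1 : ∀ x : ℝ,
      (∑ j ∈ Finset.Icc 1 1, Fstar n σ p 1 j x * Z (j-1) x) = 0 := by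
    intro x
    rw [Finset.sum_eq_single 1]
    · have e : Fstar n σ p 1 1 x = 0 := by
        simp only [Fstar, Fmat]
        rw [if_neg (by omega : ¬(n-1+1 = n-1 ∧ n-1+1 = 1)),
          if_neg (by omega : ¬(n-1+1 = n ∧ n-1+1 = 2)),
          if_neg (by omega : ¬(n-1+1 = n ∧ 3 ≤ n-1+1 ∧ n-1+1 ≤ n-1)), mul_zero]
      rw [e, zero_mul]
    · intro j hj hne
      rw [Finset.mem_Icc] at hj
      omega
    · intro h
      exact absurd (Finset.mem_Icc.2 (by omega)) h
  have Fsrowk : ∀ k, 2 ≤ k → k ≤ n-2 → ∀ x : ℝ,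
      (∑ j ∈ Finset.Icc 1 k, Fstar n σ p k j x * Z (j-1) x)
      = -((-1:ℂ)^k * p (n-k) x * z x) := by
    intro k hk2 hk x
    rw [Finset.sum_eq_single 1]
    · have e1 : n - 1 + 1 = n := by omega
      have e : Fstar n σ p k 1 x = (-1:ℂ)^(k+1+1) * (-(p (n-k+1-1) x)) := by
        unfold Fstar
        rw [e1]
        unfold Fmat
        rw [if_neg (by omega : ¬(n = n-1 ∧ n-k+1 = 1)),
          if_neg (by omega : ¬(n = n ∧ n-k+1 = 2)),
          if_pos (⟨rfl, by omega, by omega⟩ : n = n ∧ 3 ≤ n-k+1 ∧ n-k+1 ≤ n-1)]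
      rw [e]
      have e2 : n - k + 1 - 1 = n - k := by omega
      rw [e2, hZ0]
      have e3 : (-1:ℂ)^(k+1+1) = (-1:ℂ)^k := by
        rw [pow_succ, pow_succ]
        ring
      rw [e3]
      ring
    · intro j hj hne
      rw [Finset.mem_Icc] at hj
      have e : Fmat n σ p (n-j+1) (n-k+1) x = 0 := by
        unfold Fmat
        rw [if_neg (by omega : ¬(n-j+1 = n-1 ∧ n-k+1 = 1)),
          if_neg (by omega : ¬(n-j+1 = n ∧ n-k+1 = 2)),
          if_neg (by omega : ¬(n-j+1 = n ∧ 3 ≤ n-k+1 ∧ n-k+1 ≤ n-1))]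
      simp only [Fstar, e, mul_zero, zero_mul]
    · intro h
      exact absurd (Finset.mem_Icc.2 (by omega)) h
  have FsrowTop : ∀ x : ℝ,
      (∑ j ∈ Finset.Icc 1 (n-1), Fstar n σ p (n-1) j x * Z (j-1) x)
      = (-1:ℂ)^n * (p 1 x - σ x) * z x := by
    intro x
    rw [Finset.sum_eq_single 1]
    · have e1 : n - 1 + 1 = n := by omega
      have e2 : n - (n-1) + 1 = 2 := by omega
      have e : Fstar n σ p (n-1) 1 x = (-1:ℂ)^(n-1+1+1) * (σ x - p 1 x) := by
        unfold Fstar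
        rw [e1, e2]
        unfold Fmat
        rw [if_neg (by omega : ¬(n = n-1 ∧ (2:ℕ) = 1)),
          if_pos (⟨rfl, rfl⟩ : n = n ∧ (2:ℕ) = 2)]
      rw [e, hZ0]
      have e3 : (-1:ℂ)^(n-1+1+1) = -(-1:ℂ)^n := by
        have e4 : n - 1 + 1 + 1 = n + 1 := by omega
        rw [e4, pow_succ]
        ring
      rw [e3]
      ring
    · intro j hj hne
      rw [Finset.mem_Icc] at hj
      have e : Fmat n σ p (n-j+1) (n-(n-1)+1) x = 0 := by
        have e2 : n - (n-1) + 1 = 2 := by omega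
        rw [e2]
        unfold Fmat
        rw [if_neg (by omega : ¬(n-j+1 = n-1 ∧ (2:ℕ) = 1)),
          if_neg (by omega : ¬(n-j+1 = n ∧ (2:ℕ) = 2)),
          if_neg (by omega : ¬(n-j+1 = n ∧ 3 ≤ 2 ∧ (2:ℕ) ≤ n-1))]
      simp only [Fstar, e, mul_zero, zero_mul]
    · intro h
      exact absurd (Finset.mem_Icc.2 (by omega)) h
  -- continuity facts
  have Ycont : ∀ k, k ≤ n-1 → ContinuousOn (Y k) (Icc (0:ℝ) 1) :=
    fun k hk => (hYac k hk).continuousOn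
  have Zcont : ∀ k, k ≤ n-1 → ContinuousOn (Z k) (Icc (0:ℝ) 1) :=
    fun k hk => (hZac k hk).continuousOn
  have pAC : ∀ q, 2 ≤ q → q ≤ n-2 → ∀ i, i ≤ q-2 → ACOn01 (deriv^[i] (p q)) := by
    intro q hq hq2 i hi
    exact (hp q (by omega) hq2).1 i (by omega)
  have pcont : ∀ q, 2 ≤ q → q ≤ n-2 → ∀ i, i ≤ q-2 →
      ContinuousOn (deriv^[i] (p q)) (Icc (0:ℝ) 1) :=
    fun q hq hq2 i hi => (pAC q hq hq2 i hi).continuousOn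
  have zcont : ContinuousOn z (Icc (0:ℝ) 1) := hZ0 ▸ (hZac 0 (by omega)).continuousOn
  -- everywhere derivative chains for Y
  have HYstep : ∀ k, k+1 ≤ n-2 → ∀ x ∈ Ioo (0:ℝ) 1, HasDerivAt (Y k) (Y (k+1) x) x := by
    intro k hk
    apply (hYac k (by omega)).hasDerivAt_of_ae (Ycont (k+1) (by omega))
    filter_upwards [hYrec (k+1) (by omega) (by omega)] with x hx
    rw [Frow0 (k+1) (by omega) (by omega) x, add_zero] at hx
    simpa using hx
  have EY : ∀ k, k ≤ n-2 → Set.EqOn (deriv^[k] y) (Y k) (Ioo (0:ℝ) 1) := by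
    intro k
    induction k with
    | zero => intro _ x _ ; simp [hY0]
    | succ k ih =>
      intro hk x hx
      have hD : HasDerivAt (deriv^[k] y) (Y (k+1) x) x :=
        s7_hasDerivAt_congr_Ioo (ih (by omega)) hx (HYstep k (by omega) x hx)
      rw [Function.iterate_succ_apply']
      exact hD.deriv
  have EYtop : ∀ᵐ x ∂(volume.restrict (Ioo (0:ℝ) 1)),
      deriv^[n-1] y x = Y (n-1) x - σ x * y x := by
    filter_upwards [hYrec (n-1) (by omega) (by omega), ae_restrict_mem measurableSet_Ioo]
      with x hx hmem
    rw [FrowTop x] at hx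
    have e : n - 1 - 1 = n - 2 := by omega
    rw [e] at hx
    have h2 : HasDerivAt (deriv^[n-2] y) (Y (n-1) x + -(σ x * y x)) x :=
      s7_hasDerivAt_congr_Ioo (EY (n-2) le_rfl) hmem hx
    have e2 : n - 1 = (n-2) + 1 := by omega
    rw [e2, Function.iterate_succ_apply', h2.deriv, ← e2]
    ring
  -- chains for p
  have HpAe : ∀ q, 2 ≤ q → q ≤ n-2 → ∀ i, i + 2 ≤ q →
      ∀ᵐ x ∂(volume.restrict (Ioo (0:ℝ) 1)),
        HasDerivAt (deriv^[i] (p q)) (deriv^[i+1] (p q) x) x := by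
    intro q hq hq2 i hi
    filter_upwards [(pAC q hq hq2 i (by omega)).ae_hasDerivAt] with x hx
    rwa [Function.iterate_succ_apply']
  have HpStep : ∀ q, 2 ≤ q → q ≤ n-2 → ∀ i, i + 3 ≤ q → ∀ x ∈ Ioo (0:ℝ) 1,
      HasDerivAt (deriv^[i] (p q)) (deriv^[i+1] (p q) x) x :=
    fun q hq hq2 i hi =>
      (pAC q hq hq2 i (by omega)).hasDerivAt_of_ae (pcont q hq hq2 (i+1) (by omega))
        (HpAe q hq hq2 i (by omega))
  -- chains for Z
  have HZzero : ∀ x ∈ Ioo (0:ℝ) 1, HasDerivAt (Z 0) (Z 1 x) x := by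
    apply (hZac 0 (by omega)).hasDerivAt_of_ae (Zcont 1 (by omega))
    filter_upwards [hZrec 1 (by omega) (by omega)] with x hx
    rw [Fsrow1 x, add_zero] at hx
    exact hx
  have HZstep : ∀ k, 2 ≤ k → k ≤ n-2 → ∀ x ∈ Ioo (0:ℝ) 1,
      HasDerivAt (Z (k-1)) (Z k x - (-1:ℂ)^k * p (n-k) x * z x) x := by
    intro k hk2 hk
    have hu : ContinuousOn (fun t => Z k t - (-1:ℂ)^k * p (n-k) t * z t) (Icc (0:ℝ) 1) := by
      apply (Zcont k (by omega)).sub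
      apply ContinuousOn.mul ?_ zcont
      apply ContinuousOn.mul continuousOn_const
      have := pcont (n-k) (by omega) (by omega) 0 (by omega)
      simpa using this
    apply (hZac (k-1) (by omega)).hasDerivAt_of_ae hu
    filter_upwards [hZrec k (by omega) (by omega)] with x hx
    rw [Fsrowk k hk2 hk x] at hx
    have e : Z k x + -((-1:ℂ)^k * p (n-k) x * z x) = Z k x - (-1:ℂ)^k * p (n-k) x * z x := by
      ring
    rwa [e] at hx
  -- the inductive structure for Z
  have MAIN : ∀ m, m ≤ n-2 →
      (∀ x ∈ Ioo (0:ℝ) 1, deriv^[m] z x = Z m x - (-1:ℂ)^m * s7R n p z m x) ∧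
      (1 ≤ m → ∀ x ∈ Ioo (0:ℝ) 1,
        HasDerivAt (deriv^[m-1] z) (Z m x - (-1:ℂ)^m * s7R n p z m x) x) := by
    intro m
    induction m using Nat.strong_induction_on with
    | _ m IH =>
      intro hm2
      have D2E : ∀ mm, 1 ≤ mm →
          (∀ x ∈ Ioo (0:ℝ) 1,
            HasDerivAt (deriv^[mm-1] z) (Z mm x - (-1:ℂ)^mm * s7R n p z mm x) x) →
          ∀ x ∈ Ioo (0:ℝ) 1, deriv^[mm] z x = Z mm x - (-1:ℂ)^mm * s7R n p z mm x := by
        intro mm hmm hD x hx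
        have e : mm = (mm-1) + 1 := by omega
        conv_lhs => rw [e, Function.iterate_succ_apply']
        rw [(hD x hx).deriv]
      match m, hm2 with
      | 0, _ =>
        constructor
        · intro x hx
          simp [s7R, hZ0]
        · intro h
          exact absurd h (by omega)
      | 1, h1 =>
        have hD : ∀ x ∈ Ioo (0:ℝ) 1,
            HasDerivAt (deriv^[1-1] z) (Z 1 x - (-1:ℂ)^1 * s7R n p z 1 x) x := by
          intro x hx
          have h0 := HZzero x hx
          rw [hZ0] at h0
          simpa [s7R] using h0
        exact ⟨D2E 1 (by omega) hD, fun _ => hD⟩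
      | (mm+2), h2 =>
        have hD : ∀ x ∈ Ioo (0:ℝ) 1,
            HasDerivAt (deriv^[mm+2-1] z) (Z (mm+2) x - (-1:ℂ)^(mm+2) * s7R n p z (mm+2) x) x := by
          intro x hx
          set Dval : ℂ := ∑ j ∈ Finset.range mm,
              ((∑ s ∈ Finset.Icc j (mm-1),
                  (-1:ℂ)^s * (s.choose j : ℂ) * deriv^[s-j+1] (p (n-(mm+1)+s)) x)
                  * deriv^[j] z x
               + (∑ s ∈ Finset.Icc j (mm-1),
                  (-1:ℂ)^s * (s.choose j : ℂ) * deriv^[s-j] (p (n-(mm+1)+s)) x)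
                  * deriv^[j+1] z x) with hDval
          have hZd : HasDerivAt (Z (mm+1))
              (Z (mm+2) x - (-1:ℂ)^(mm+2) * p (n-(mm+2)) x * z x) x :=
            HZstep (mm+2) (by omega) (by omega) x hx
          have hRd : HasDerivAt (fun t => s7R n p z (mm+1) t) Dval x := by
            rw [hDval]
            simp only [s7R, show mm+1-1 = mm from rfl, show mm+1-2 = mm-1 from rfl]
            apply HasDerivAt.fun_sum
            intro j hj
            rw [Finset.mem_range] at hj
            have hzj : HasDerivAt (deriv^[j] z) (deriv^[j+1] z x) x := by
              have ha := (IH (j+1) (by omega) (by omega)).2 (by omega) x hx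
              have hb := (IH (j+1) (by omega) (by omega)).1 x hx
              simp only [Nat.add_sub_cancel] at ha
              rw [← hb] at ha
              exact ha
            have hps : HasDerivAt
                (fun t => ∑ s ∈ Finset.Icc j (mm-1),
                  (-1:ℂ)^s * (s.choose j : ℂ) * deriv^[s-j] (p (n-(mm+1)+s)) t)
                (∑ s ∈ Finset.Icc j (mm-1),
                  (-1:ℂ)^s * (s.choose j : ℂ) * deriv^[s-j+1] (p (n-(mm+1)+s)) x) x := by
              apply HasDerivAt.fun_sum
              intro s hs
              rw [Finset.mem_Icc] at hs
              exact (HpStep (n-(mm+1)+s) (by omega) (by omega) (s-j) (by omega) x hx).const_mul _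
            exact hps.mul hzj
          have hcomb : HasDerivAt
              (fun t => Z (mm+1) t - (-1:ℂ)^(mm+1) * s7R n p z (mm+1) t)
              ((Z (mm+2) x - (-1:ℂ)^(mm+2) * p (n-(mm+2)) x * z x) - (-1:ℂ)^(mm+1) * Dval) x :=
            hZd.sub (hRd.const_mul _)
          have hEqprev : Set.EqOn (deriv^[mm+1] z)
              (fun t => Z (mm+1) t - (-1:ℂ)^(mm+1) * s7R n p z (mm+1) t) (Ioo (0:ℝ) 1) :=
            fun t ht => (IH (mm+1) (by omega) (by omega)).1 t ht
          have hfin := s7_hasDerivAt_congr_Ioo hEqprev hx hcomb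
          have hRstep : s7R n p z (mm+2) x = p (n-(mm+2)) x * z x - Dval := by
            have hc := s7_combStep (mm+1) (by omega)
              (fun s i => deriv^[i] (p (n-(mm+2)+s)) x) (fun j => deriv^[j] z x)
            simp only [Function.iterate_zero_apply, Nat.add_zero,
              show mm+1-1 = mm from rfl, show mm+1-2 = mm-1 from rfl] at hc
            simp only [s7R, show mm+2-1 = mm+1 from rfl, show mm+2-2 = mm from rfl]
            rw [hc]
            congr 1
            rw [hDval]
            apply Finset.sum_congr rfl
            intro j _
            congr 2
            · apply Finset.sum_congr rfl
              intro s _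
              rw [show n-(mm+2)+(s+1) = n-(mm+1)+s from by omega]
            · apply Finset.sum_congr rfl
              intro s _
              rw [show n-(mm+2)+(s+1) = n-(mm+1)+s from by omega]
          have hval : (Z (mm+2) x - (-1:ℂ)^(mm+2) * p (n-(mm+2)) x * z x) - (-1:ℂ)^(mm+1) * Dval
              = Z (mm+2) x - (-1:ℂ)^(mm+2) * s7R n p z (mm+2) x := by
            rw [hRstep, pow_succ (-1:ℂ) (mm+1)]
            ring
          exact hval ▸ hfin
        exact ⟨D2E (mm+2) (by omega) hD, fun _ => hD⟩
  have HDzAll : ∀ j, j + 1 ≤ n-2 → ∀ x ∈ Ioo (0:ℝ) 1,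
      HasDerivAt (deriv^[j] z) (deriv^[j+1] z x) x := by
    intro j hj x hx
    have h1 := (MAIN (j+1) (by omega)).2 (by omega) x hx
    have h2 := (MAIN (j+1) (by omega)).1 x hx
    simp only [Nat.add_sub_cancel] at h1
    rw [← h2] at h1
    exact h1
  have pae_all : ∀ᵐ x ∂(volume.restrict (Ioo (0:ℝ) 1)), ∀ q i, 2 ≤ q → q ≤ n-2 → i + 2 ≤ q →
      HasDerivAt (deriv^[i] (p q)) (deriv^[i+1] (p q) x) x := by
    refine MeasureTheory.ae_all_iff.2 fun q => MeasureTheory.ae_all_iff.2 fun i => ?_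
    by_cases h : 2 ≤ q ∧ q ≤ n-2 ∧ i + 2 ≤ q
    · filter_upwards [HpAe q h.1 h.2.1 i h.2.2] with x hx
      intro _ _ _
      exact hx
    · exact Filter.Eventually.of_forall fun x h1 h2 h3 => absurd ⟨h1, h2, h3⟩ h
  have EZtop : ∀ᵐ x ∂(volume.restrict (Ioo (0:ℝ) 1)),
      deriv^[n-1] z x = Z (n-1) x - (-1:ℂ)^(n-1) * (s7R n p z (n-1) x - σ x * z x) := by
    filter_upwards [hZrec (n-1) (by omega) (by omega), pae_all, ae_restrict_mem measurableSet_Ioo]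
      with x hx hpae hmem
    rw [FsrowTop x] at hx
    rw [show n-1-1 = n-2 from by omega] at hx
    set DvalT : ℂ := ∑ j ∈ Finset.range (n-2-1),
        ((∑ s ∈ Finset.Icc j (n-2-2),
            (-1:ℂ)^s * (s.choose j : ℂ) * deriv^[s-j+1] (p (n-(n-2)+s)) x) * deriv^[j] z x
         + (∑ s ∈ Finset.Icc j (n-2-2),
            (-1:ℂ)^s * (s.choose j : ℂ) * deriv^[s-j] (p (n-(n-2)+s)) x) * deriv^[j+1] z x)
      with hDvalT
    have hRd : HasDerivAt (fun t => s7R n p z (n-2) t) DvalT x := by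
      rw [hDvalT]
      simp only [s7R]
      apply HasDerivAt.fun_sum
      intro j hj
      rw [Finset.mem_range] at hj
      have hzj : HasDerivAt (deriv^[j] z) (deriv^[j+1] z x) x := HDzAll j (by omega) x hmem
      have hps : HasDerivAt
          (fun t => ∑ s ∈ Finset.Icc j (n-2-2),
            (-1:ℂ)^s * (s.choose j : ℂ) * deriv^[s-j] (p (n-(n-2)+s)) t)
          (∑ s ∈ Finset.Icc j (n-2-2),
            (-1:ℂ)^s * (s.choose j : ℂ) * deriv^[s-j+1] (p (n-(n-2)+s)) x) x := by
        apply HasDerivAt.fun_sum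
        intro s hs
        rw [Finset.mem_Icc] at hs
        exact (hpae (n-(n-2)+s) (s-j) (by omega) (by omega) (by omega)).const_mul _
      exact hps.mul hzj
    have hcomb : HasDerivAt (fun t => Z (n-2) t - (-1:ℂ)^(n-2) * s7R n p z (n-2) t)
        ((Z (n-1) x + (-1:ℂ)^n * (p 1 x - σ x) * z x) - (-1:ℂ)^(n-2) * DvalT) x :=
      hx.sub (hRd.const_mul _)
    have hEqprev : Set.EqOn (deriv^[n-2] z)
        (fun t => Z (n-2) t - (-1:ℂ)^(n-2) * s7R n p z (n-2) t) (Ioo (0:ℝ) 1) :=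
      fun t ht => (MAIN (n-2) (by omega)).1 t ht
    have hfin := s7_hasDerivAt_congr_Ioo hEqprev hmem hcomb
    have hRstep : s7R n p z (n-1) x = p 1 x * z x - DvalT := by
      have hc := s7_combStep (n-2) (by omega)
        (fun s i => deriv^[i] (p (n-(n-1)+s)) x) (fun j => deriv^[j] z x)
      simp only [Function.iterate_zero_apply, Nat.add_zero] at hc
      simp only [s7R]
      rw [show n-1-1 = n-2 from by omega, show n-1-2 = n-2-1 from by omega]
      rw [hc]
      congr 1
      · rw [show n-(n-1) = 1 from by omega]
      · rw [hDvalT]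
        apply Finset.sum_congr rfl
        intro j _
        congr 2
        · apply Finset.sum_congr rfl
          intro s _
          rw [show n-(n-1)+(s+1) = n-(n-2)+s from by omega]
        · apply Finset.sum_congr rfl
          intro s _
          rw [show n-(n-1)+(s+1) = n-(n-2)+s from by omega]
    conv_lhs => rw [show n-1 = (n-2)+1 from by omega, Function.iterate_succ_apply']
    rw [hfin.deriv, hRstep]
    have hx2 : (-1:ℂ)^(n-2) * (-1:ℂ)^2 = (-1:ℂ)^n := by
      rw [← pow_add]
      congr 1
      omega
    have hx1 : (-1:ℂ)^(n-1) * (-1:ℂ)^1 = (-1:ℂ)^n := by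
      rw [← pow_add]
      congr 1
      omega
    have hA : (-1:ℂ)^(n-2) = (-1:ℂ)^n := by
      rw [← hx2]
      norm_num
    have hB : (-1:ℂ)^(n-1) = -(-1:ℂ)^n := by
      rw [pow_one] at hx1
      linear_combination -hx1
    rw [hA, hB]
    ring
  -- final assembly
  filter_upwards [EYtop, EZtop, ae_restrict_mem measurableSet_Ioo] with x EYv EZv hmem
  have hsq : ∀ k : ℕ, (-1:ℂ)^k * (-1:ℂ)^k = 1 := by
    intro k
    rw [← mul_pow]
    norm_num
  have hsplit : ∀ k ∈ Finset.range n, (-1:ℂ)^k * Z k x * Y (n-k-1) x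
      = (-1:ℂ)^k * deriv^[k] z x * deriv^[n-k-1] y x
        + s7R n p z k x * deriv^[n-k-1] y x
        + (if k = 0 then σ x * z x * y x else 0)
        + (if k = n-1 then -(σ x * z x * y x) else 0) := by
    intro k hk
    rw [Finset.mem_range] at hk
    by_cases hk0 : k = 0
    · subst hk0
      rw [if_pos rfl, if_neg (by omega : ¬(0:ℕ) = n-1)]
      simp only [pow_zero, one_mul, Nat.sub_zero, Function.iterate_zero_apply, hZ0]
      rw [show s7R n p z 0 x = 0 from by simp [s7R]]
      linear_combination (-(z x)) * EYv
    · by_cases hk1 : k = n-1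
      · subst hk1
        rw [if_neg hk0, if_pos rfl]
        rw [show n-(n-1)-1 = 0 from by omega]
        simp only [Function.iterate_zero_apply, hY0]
        linear_combination (-((-1:ℂ)^(n-1) * y x)) * EZv
          + ((s7R n p z (n-1) x - σ x * z x) * y x) * hsq (n-1)
      · rw [if_neg hk0, if_neg hk1, add_zero, add_zero]
        have hZk := (MAIN k (by omega)).1 x hmem
        have hYk : Y (n-k-1) x = deriv^[n-k-1] y x := (EY (n-k-1) (by omega) hmem).symm
        rw [hYk]
        linear_combination (-((-1:ℂ)^k * deriv^[n-k-1] y x)) * hZk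
          + (s7R n p z k x * deriv^[n-k-1] y x) * hsq k
  rw [Finset.sum_congr rfl hsplit]
  simp only [Finset.sum_add_distrib]
  rw [Finset.sum_ite_eq' (Finset.range n) 0 (fun _ => σ x * z x * y x),
    Finset.sum_ite_eq' (Finset.range n) (n-1) (fun _ => -(σ x * z x * y x)),
    if_pos (Finset.mem_range.2 (by omega : (0:ℕ) < n)),
    if_pos (Finset.mem_range.2 (by omega : n-1 < n))]
  have hS1 : (∑ k ∈ Finset.range n, (-1:ℂ)^k * deriv^[k] z x * deriv^[n-k-1] y x)
      = ∑ k ∈ Finset.range n, (-1:ℂ)^(n-k-1) * deriv^[n-k-1] z x * deriv^[k] y x := by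
    rw [← Finset.sum_range_reflect (fun k => (-1:ℂ)^k * deriv^[k] z x * deriv^[n-k-1] y x) n]
    apply Finset.sum_congr rfl
    intro k hk
    rw [Finset.mem_range] at hk
    rw [show n-1-k = n-k-1 from by omega, show n-(n-k-1)-1 = k from by omega]
  have hS2 : (∑ k ∈ Finset.range n, s7R n p z k x * deriv^[n-k-1] y x)
      = ∑ k ∈ Finset.range (n-2), deriv^[k] y x
          * ∑ j ∈ Finset.range (n-k-2),
              (∑ s ∈ Finset.Icc j (n-k-3),
                (-1:ℂ)^s * (Nat.choose s j : ℂ) * deriv^[s-j] (p (s+k+1)) x)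
              * deriv^[j] z x := by
    rw [← Finset.sum_range_reflect (fun k => s7R n p z k x * deriv^[n-k-1] y x) n]
    have hdrop : ∑ k ∈ Finset.range n, s7R n p z (n-1-k) x * deriv^[n-(n-1-k)-1] y x
        = ∑ k ∈ Finset.range (n-2), s7R n p z (n-1-k) x * deriv^[n-(n-1-k)-1] y x := by
      symm
      apply Finset.sum_subset (Finset.range_subset_range.2 (by omega))
      intro k hk hnk
      rw [Finset.mem_range] at hk hnk
      have hz0 : s7R n p z (n-1-k) x = 0 := by
        rw [s7R, show n-1-k-1 = 0 from by omega]
        simp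
      rw [hz0, zero_mul]
    rw [hdrop]
    apply Finset.sum_congr rfl
    intro k hk
    rw [Finset.mem_range] at hk
    rw [show n-(n-1-k)-1 = k from by omega, mul_comm]
    congr 1
    rw [s7R, show n-1-k-1 = n-k-2 from by omega, show n-1-k-2 = n-k-3 from by omega]
    apply Finset.sum_congr rfl
    intro j _
    congr 1
    apply Finset.sum_congr rfl
    intro s' _
    rw [show n-(n-1-k)+s' = s'+k+1 from by omega]
  rw [hS1, hS2]
  ring




end S7Main
end
end
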